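/- arXiv:0903.3342 — 5 statements merged into one kernel-verified Lean document; each statement's English description precedes it below -/
import Mathlib

section
/- For every n ≥ 1, (n!/2^n) · Σ_{T ∈ B(n)} ∏_{v ∈ T} (1 + 1/h_v) = (n+1)^(n-1), where B(n) is the set of binary trees with n vertices. -/
/-- Binary trees: each vertex has an ordered pair of (possibly empty) subtrees. -/
inductive BTree : Type
  | leaf : BTree
  | node : BTree → BTree → BTree

namespace BTree

/-- The number of vertices of a binary tree. -/
def size : BTree → ℕ
  | leaf => 0
  | node l r => size l + size r + 1

/-- The multiset of hook lengths of a binary tree: the hook length of a vertex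
is the number of its descendants, counting the vertex itself. -/
def hooks : BTree → Multiset ℕ+
  | leaf => 0
  | node l r => ⟨size l + size r + 1, Nat.succ_pos _⟩ ::ₘ (hooks l + hooks r)

end BTree

/-!
Let `S n` be the sum of `∏ (1 + 1/h_v)` over the binary trees with `n` vertices. The root of such
a tree has hook length `n + 1`, so splitting at the root gives
`S (n+1) = (1 + 1/(n+1)) ∑_{i+j=n} S i * S j`. The Abel polynomials `A 0 = 1`,
`A (n+1) = X (X + n + 1)^n` satisfy `A' (n+1) = (n+1) A n (X + 1)` and `A (n+1) 0 = 0`, which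
makes them of binomial type: `A n (x + y) = ∑_{i+j=n} C(n,i) A i x * A j y` (Abel's identity).
Hence `a n = n! S n / 2^n` and `A n 1` both satisfy `a (n+1) = (n+2)/2 ∑_{i+j=n} C(n,i) a i a j`,
the latter by Abel's identity at `x = y = 1` and `(n+2) A n 2 = 2 A (n+1) 1`. So
`a n = A n 1 = (n+1)^(n-1)`.
-/

open Polynomial Finset

namespace Polynomial

variable {R : Type*} [CommRing R] [IsAddTorsionFree R]

theorem eq_of_derivative_eq_of_eval_zero_eq {p q : R[X]} (hd : derivative p = derivative q)
    (h0 : p.eval 0 = q.eval 0) : p = q := by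
  have hC := eq_C_of_derivative_eq_zero (p := p - q) (by rw [derivative_sub, hd, sub_self])
  rwa [coeff_zero_eq_eval_zero, eval_sub, h0, sub_self, map_zero, sub_eq_zero] at hC

end Polynomial

variable {R : Type*} [CommRing R]

noncomputable def abelPoly (R : Type*) [CommRing R] : ℕ → R[X]
  | 0 => 1
  | n + 1 => X * (X + C ((n : R) + 1)) ^ n

@[simp] lemma abelPoly_zero : abelPoly R 0 = 1 := rfl

lemma abelPoly_succ_eval (n : ℕ) (x : R) :
    (abelPoly R (n + 1)).eval x = x * (x + n + 1) ^ n := by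
  simp [abelPoly, add_assoc]

lemma derivative_abelPoly_succ (n : ℕ) :
    derivative (abelPoly R (n + 1)) = C ((n : R) + 1) * (abelPoly R n).comp (X + 1) := by
  cases n with
  | zero => simp [abelPoly]
  | succ n =>
    rw [abelPoly, abelPoly, derivative_mul, derivative_X, derivative_X_add_C_pow]
    simp only [mul_comp, X_comp, pow_comp, add_comp, one_comp, natCast_comp, Nat.add_sub_cancel,
      map_add, map_one, map_natCast]
    push_cast
    ring

theorem abelPoly_comp_X_add_C [IsAddTorsionFree R] (n : ℕ) (y : R) :
    (abelPoly R n).comp (X + C y) =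
      ∑ p ∈ antidiagonal n, C (n.choose p.1 * (abelPoly R p.2).eval y) * abelPoly R p.1 := by
  induction n with
  | zero => simp
  | succ n ih =>
    apply eq_of_derivative_eq_of_eval_zero_eq
    · have hshift : (X + 1 : R[X]).comp (X + C y) = (X + C y).comp (X + 1) := by
        simp only [add_comp, X_comp, one_comp, C_comp]; ring
      rw [derivative_comp, derivative_abelPoly_succ, mul_comp, comp_assoc, hshift, ← comp_assoc,
        ih, Polynomial.sum_comp, derivative_sum, Nat.sum_antidiagonal_succ, mul_sum]
      simp only [derivative_add, derivative_X, derivative_C, add_zero, one_mul, C_comp, mul_comp,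
        derivative_mul, zero_mul, zero_add, abelPoly_zero, derivative_one, mul_zero,
        derivative_abelPoly_succ]
      refine sum_congr rfl fun p _ => ?_
      have hchoose := congrArg (Nat.cast (R := R)) (Nat.add_one_mul_choose_eq n p.1)
      push_cast at hchoose ⊢
      rw [← mul_assoc, ← mul_assoc, ← C_mul, ← C_mul]
      congr 2
      linear_combination (abelPoly R p.2).eval y * hchoose
    · simp [Nat.sum_antidiagonal_succ, eval_finsetSum, abelPoly_succ_eval]

theorem abelPoly_eval_add [IsAddTorsionFree R] (n : ℕ) (x y : R) :
    (abelPoly R n).eval (x + y) =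
      ∑ p ∈ antidiagonal n,
        n.choose p.1 * (abelPoly R p.1).eval x * (abelPoly R p.2).eval y := by
  have h := congrArg (eval x) (abelPoly_comp_X_add_C n y)
  simp only [eval_comp, eval_add, eval_X, eval_C, eval_finsetSum, eval_mul] at h
  rw [h]
  exact sum_congr rfl fun p _ => by ring

lemma abelPoly_eval_one (n : ℕ) : (abelPoly R n).eval 1 = ((n : R) + 1) ^ (n - 1) := by
  cases n with
  | zero => simp
  | succ n => simp [abelPoly_succ_eval]; ring

lemma add_two_mul_abelPoly_eval_two (n : ℕ) :
    ((n : R) + 2) * (abelPoly R n).eval 2 = 2 * (abelPoly R (n + 1)).eval 1 := by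
  cases n with
  | zero => simp [abelPoly_succ_eval]
  | succ n => simp only [abelPoly_succ_eval]; push_cast; ring

namespace BTree

open BinaryTree

noncomputable def hookWeight (t : BTree) : ℚ :=
  (t.hooks.map fun h => (1 : ℚ) + 1 / (h : ℚ)).prod

lemma hookWeight_leaf : hookWeight leaf = 1 := rfl

lemma hookWeight_node (l r : BTree) :
    hookWeight (node l r) =
      (1 + 1 / ((l.size + r.size + 1 : ℕ) : ℚ)) * (hookWeight l * hookWeight r) := by
  have h : hooks (node l r) = (l.size + r.size).succPNat ::ₘ (l.hooks + r.hooks) := rfl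
  simp [hookWeight, h]

/-- Transport to Mathlib's `BinaryTree Unit`, to reuse its enumeration `treesOfNumNodesEq`. -/
def toBinaryTree : BTree → BinaryTree Unit
  | leaf => nil
  | node l r => l.toBinaryTree △ r.toBinaryTree

def ofBinaryTree : BinaryTree Unit → BTree
  | nil => leaf
  | BinaryTree.node _ l r => node (ofBinaryTree l) (ofBinaryTree r)

def equivBinaryTree : BTree ≃ BinaryTree Unit where
  toFun := toBinaryTree
  invFun := ofBinaryTree
  left_inv t := by induction t <;> simp [toBinaryTree, ofBinaryTree, *]
  right_inv x := by induction x <;> simp [toBinaryTree, ofBinaryTree, *]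

lemma size_ofBinaryTree (x : BinaryTree Unit) : (ofBinaryTree x).size = x.numNodes := by
  induction x <;> simp [ofBinaryTree, size, *]

lemma finsum_subtype_size_eq {M : Type*} [AddCommMonoid M] (f : BTree → M) (n : ℕ) :
    ∑ᶠ t : {t : BTree // t.size = n}, f t =
      ∑ x ∈ treesOfNumNodesEq n, f (ofBinaryTree x) := by
  let e : {x : BinaryTree Unit // x.numNodes = n} ≃ {t : BTree // t.size = n} :=
    equivBinaryTree.symm.subtypeEquiv fun x => by simp [equivBinaryTree, size_ofBinaryTree]
  rw [← finsum_comp_equiv e, ← finsum_mem_coe_finset, coe_treesOfNumNodesEq]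
  exact finsum_subtype_eq_finsum_cond (f := fun x => f (ofBinaryTree x)) _

noncomputable def totalHookWeight (n : ℕ) : ℚ :=
  ∑ x ∈ treesOfNumNodesEq n, hookWeight (ofBinaryTree x)

lemma pairwiseDisjoint_pairwiseNode (n : ℕ) :
    (antidiagonal n : Set (ℕ × ℕ)).PairwiseDisjoint
      fun p => pairwiseNode (treesOfNumNodesEq p.1) (treesOfNumNodesEq p.2) := by
  intro p hp q hq hpq
  simp only [Function.onFun, disjoint_left, mem_map, mem_product, mem_treesOfNumNodesEq]
  rintro _ ⟨⟨x, y⟩, ⟨hx, -⟩, rfl⟩ ⟨⟨x', y'⟩, ⟨hx', -⟩, h⟩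
  obtain ⟨rfl, -⟩ := Prod.ext_iff.mp (Function.Embedding.injective _ h)
  dsimp only at hx hx'
  rw [mem_coe, HasAntidiagonal.mem_antidiagonal] at hp hq
  exact hpq (Prod.ext (hx.symm.trans hx') (by omega))

lemma totalHookWeight_succ (n : ℕ) :
    totalHookWeight (n + 1) = (1 + 1 / ((n + 1 : ℕ) : ℚ)) *
      ∑ p ∈ antidiagonal n, totalHookWeight p.1 * totalHookWeight p.2 := by
  rw [totalHookWeight, treesOfNumNodesEq_succ, sum_biUnion (pairwiseDisjoint_pairwiseNode n),
    mul_sum]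
  refine sum_congr rfl fun p hp => ?_
  rw [sum_map, totalHookWeight, totalHookWeight, sum_mul_sum, ← sum_product', mul_sum]
  refine sum_congr rfl fun q hq => ?_
  obtain ⟨x, y⟩ := q
  rw [mem_product, mem_treesOfNumNodesEq, mem_treesOfNumNodesEq] at hq
  rw [HasAntidiagonal.mem_antidiagonal] at hp
  change hookWeight (node (ofBinaryTree x) (ofBinaryTree y)) = _
  rw [hookWeight_node, size_ofBinaryTree, size_ofBinaryTree, hq.1, hq.2, hp]

theorem totalHookWeight_eq (n : ℕ) :
    totalHookWeight n = 2 ^ n * (abelPoly ℚ n).eval 1 / n.factorial := by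
  induction n using Nat.strong_induction_on with
  | _ n ih =>
  cases n with
  | zero => simp [totalHookWeight, ofBinaryTree, hookWeight_leaf]
  | succ n =>
    have hsum : ∑ p ∈ antidiagonal n, totalHookWeight p.1 * totalHookWeight p.2 =
        2 ^ n * (abelPoly ℚ n).eval (1 + 1) / n.factorial := by
      rw [abelPoly_eval_add, mul_sum, sum_div]
      refine sum_congr rfl fun p hp => ?_
      obtain ⟨i, j⟩ := p
      rw [HasAntidiagonal.mem_antidiagonal] at hp
      subst hp
      rw [ih i (by omega), ih j (by omega), Nat.cast_add_choose]
      field_simp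
      ring
    have htwo := add_two_mul_abelPoly_eval_two (R := ℚ) n
    rw [totalHookWeight_succ, hsum, one_add_one_eq_two, Nat.factorial_succ]
    push_cast
    field_simp
    linear_combination 2 ^ n * htwo

end BTree

open BTree in
theorem postnikov_hook_formula_general (n : ℕ) :
    (n.factorial : ℚ) / 2 ^ n *
      ∑ᶠ T : {t : BTree // t.size = n},
        ((T : BTree).hooks.map fun h => (1 : ℚ) + 1 / (h : ℚ)).prod
    = ((n : ℚ) + 1) ^ (n - 1) := by
  show _ * ∑ᶠ T : {t : BTree // t.size = n}, hookWeight T = _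
  rw [finsum_subtype_size_eq, ← totalHookWeight, totalHookWeight_eq, abelPoly_eval_one]
  field_simp

/-- Postnikov's hook length formula for binary trees. -/
theorem postnikov_hook_formula (n : ℕ) (hn : 1 ≤ n) :
    (n.factorial : ℚ) / 2 ^ n *
      ∑ᶠ T : {t : BTree // t.size = n},
        ((T : BTree).hooks.map fun h => (1 : ℚ) + 1 / (h : ℚ)).prod
    = ((n : ℚ) + 1) ^ (n - 1) :=
  postnikov_hook_formula_general n
end

section
/- Suppose ρ : ℕ⁺ → K is a weight function and f(x) ∈ K[[x]] satisfies 1 + Σ_{n≥1} (Σ_{T ∈ T_k(n)} ∏_{v ∈ T} ρ(h_v)) x^n = f(x), where T_k(n) is the set of k-ary trees with n vertices. Then for all n ≥ 1 with [x^{n-1}]f(x)^k ≠ 0, ρ(n) = [x^n]f(x) / [x^{n-1}]f(x)^k. -/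
/-- `k`-ary trees: each vertex has `k` linearly ordered (possibly empty) subtrees. -/
inductive KTree (k : ℕ) : Type
  | leaf : KTree k
  | node : (Fin k → KTree k) → KTree k

namespace KTree

/-- The number of vertices of a `k`-ary tree. -/
def size {k : ℕ} : KTree k → ℕ
  | leaf => 0
  | node c => (∑ i, size (c i)) + 1

/-- The multiset of hook lengths of a `k`-ary tree: the hook length of a vertex
is the number of its descendants, counting the vertex itself. -/
def hooks {k : ℕ} : KTree k → Multiset ℕ+
  | leaf => 0
  | node c => ⟨(∑ i, size (c i)) + 1, Nat.succ_pos _⟩ ::ₘ ∑ i, hooks (c i)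

end KTree

/-!
A tree with `n ≥ 1` vertices is a root together with a `k`-tuple of subtrees of total size `n - 1`,
and its weight is `ρ n` times the product of the weights of the subtrees. The generating function
of `k`-tuples of trees graded by total size is `f ^ k`, so `[xⁿ] f = ρ n * [xⁿ⁻¹] f ^ k`.
-/

open PowerSeries Finset

section GeneratingFunction

variable {α β R : Type*} [CommSemiring R]

/-- Since `∑ᶠ` vanishes on infinite families, this is the intended series only when the fibres of
`s` are finite. -/
noncomputable def ogf (s : α → ℕ) (w : α → R) : R⟦X⟧ :=
  mk fun n => ∑ᶠ a : {a // s a = n}, w a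

@[simp]
lemma coeff_ogf (s : α → ℕ) (w : α → R) (n : ℕ) :
    coeff n (ogf s w) = ∑ᶠ a : {a // s a = n}, w a :=
  coeff_mk _ _

lemma ogf_congr_equiv {s : α → ℕ} {t : β → ℕ} {w : α → R} {v : β → R} (e : α ≃ β)
    (hs : ∀ a, t (e a) = s a) (hw : ∀ a, v (e a) = w a) : ogf s w = ogf t v := by
  ext n
  rw [coeff_ogf, coeff_ogf, ← finsum_comp_equiv (e.subtypeEquiv fun a => by rw [hs])]
  exact finsum_congr fun a => (hw a).symm

variable (s : α → ℕ) (t : β → ℕ)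

def fiberProdEquiv (n : ℕ) :
    {p : α × β // s p.1 + t p.2 = n} ≃
      Σ ij : antidiagonal n, {a // s a = ij.1.1} × {b // t b = ij.1.2} where
  toFun p := ⟨⟨(s p.1.1, t p.1.2), mem_antidiagonal.2 p.2⟩, ⟨p.1.1, rfl⟩, ⟨p.1.2, rfl⟩⟩
  invFun x := ⟨(x.2.1, x.2.2), by rw [x.2.1.2, x.2.2.2]; exact mem_antidiagonal.1 x.1.2⟩
  left_inv _ := rfl
  right_inv := by
    rintro ⟨⟨⟨i, j⟩, h⟩, ⟨a, ha⟩, ⟨b, hb⟩⟩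
    dsimp only at ha hb
    subst ha hb
    rfl

variable [∀ n, Finite {a // s a = n}] [∀ n, Finite {b // t b = n}]

lemma finite_fiber_prod (n : ℕ) : Finite {p : α × β // s p.1 + t p.2 = n} :=
  Finite.of_equiv _ (fiberProdEquiv s t n).symm

lemma ogf_mul (w : α → R) (v : β → R) :
    ogf s w * ogf t v = ogf (fun p : α × β => s p.1 + t p.2) (fun p => w p.1 * v p.2) := by
  ext n
  let := fun m => Fintype.ofFinite {a // s a = m}
  let := fun m => Fintype.ofFinite {b // t b = m}
  have := finite_fiber_prod s t n
  let := Fintype.ofFinite {p : α × β // s p.1 + t p.2 = n}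
  simp only [coeff_mul, coeff_ogf, finsum_eq_sum_of_fintype, Fintype.sum_mul_sum,
    ← Finset.sum_coe_sort (antidiagonal n), ← Fintype.sum_prod_type']
  rw [← (fiberProdEquiv s t n).symm.sum_comp, Fintype.sum_sigma]
  rfl

lemma finite_fiber_tuple (j n : ℕ) : Finite {c : Fin j → α // ∑ i, s (c i) = n} := by
  induction j generalizing n with
  | zero => infer_instance
  | succ j ih =>
    have := finite_fiber_prod s (fun c : Fin j → α => ∑ i, s (c i)) n
    exact Finite.of_equiv {p : α × (Fin j → α) // s p.1 + ∑ i, s (p.2 i) = n}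
      ((Fin.consEquiv fun _ => α).subtypeEquiv fun p => by simp [Fin.sum_univ_succ])

lemma ogf_pow (w : α → R) (j : ℕ) :
    ogf s w ^ j = ogf (fun c : Fin j → α => ∑ i, s (c i)) (fun c => ∏ i, w (c i)) := by
  induction j with
  | zero =>
    ext (_ | n)
    · rw [pow_zero, coeff_one, if_pos rfl, coeff_ogf,
        finsum_eq_single _ ⟨finZeroElim, rfl⟩ fun _ h => absurd (Subsingleton.elim _ _) h]
      exact Finset.prod_of_isEmpty _ |>.symm
    · have : IsEmpty {c : Fin 0 → α // ∑ i, s (c i) = n + 1} := ⟨fun c => by simpa using c.2⟩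
      rw [pow_zero, coeff_one, if_neg n.succ_ne_zero, coeff_ogf, finsum_of_isEmpty]
  | succ j ih =>
    have := finite_fiber_tuple s j
    rw [pow_succ', ih, ogf_mul]
    exact ogf_congr_equiv (Fin.consEquiv fun _ => α) (by simp [Fin.sum_univ_succ])
      (by simp [Fin.prod_univ_succ])

end GeneratingFunction

namespace KTree

variable {k : ℕ}

lemma size_node (c : Fin k → KTree k) : (node c).size = ∑ i, (c i).size + 1 := rfl

lemma hooks_node (c : Fin k → KTree k) :
    (node c).hooks = (∑ i, (c i).size).succPNat ::ₘ ∑ i, (c i).hooks := rfl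

lemma size_eq_zero_iff {t : KTree k} : t.size = 0 ↔ t = leaf := by
  cases t <;> simp [size]

lemma size_lt_size_node (c : Fin k → KTree k) (i : Fin k) : (c i).size < (node c).size :=
  Nat.lt_succ_of_le (Finset.single_le_sum (fun j _ => Nat.zero_le (c j).size) (Finset.mem_univ i))

lemma finite_setOf_size_le (n : ℕ) : {t : KTree k | t.size ≤ n}.Finite := by
  induction n with
  | zero =>
    exact (Set.finite_singleton leaf).subset fun _ ht => size_eq_zero_iff.1 (Nat.le_zero.1 ht)
  | succ n ih =>
    refine (((Set.Finite.pi fun _ => ih).image node).insert leaf).subset ?_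
    rintro (_ | c) hc
    · exact Set.mem_insert _ _
    · refine Set.mem_insert_of_mem _ ⟨c, fun i _ => ?_, rfl⟩
      have := size_lt_size_node c i
      simp only [Set.mem_ofPred_eq] at hc ⊢
      omega

instance (n : ℕ) : Finite {t : KTree k // t.size = n} :=
  ((finite_setOf_size_le n).subset fun _ => le_of_eq).to_subtype

def nodeEquiv (n : ℕ) :
    {c : Fin k → KTree k // ∑ i, (c i).size = n} ≃ {t : KTree k // t.size = n + 1} where
  toFun c := ⟨node c.1, by rw [size_node, c.2]⟩
  invFun
    | ⟨leaf, h⟩ => absurd h (by simp [size])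
    | ⟨node c, h⟩ => ⟨c, Nat.succ_injective h⟩
  left_inv _ := rfl
  right_inv := by
    rintro ⟨_ | c, h⟩
    · simp [size] at h
    · rfl

variable {K : Type*} [CommSemiring K]

def weight (ρ : ℕ+ → K) (t : KTree k) : K := (t.hooks.map fun h => ρ h).prod

lemma weight_node (ρ : ℕ+ → K) (c : Fin k → KTree k) :
    weight ρ (node c) = ρ (∑ i, (c i).size).succPNat * ∏ i, weight ρ (c i) := by
  rw [weight, hooks_node, Multiset.map_cons, Multiset.prod_cons, ← Multiset.coe_mapAddMonoidHom,
    map_sum, Multiset.prod_sum]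
  rfl

lemma coeff_succ_ogf_weight (ρ : ℕ+ → K) (n : ℕ) :
    coeff (n + 1) (ogf size (weight (k := k) ρ)) =
      ρ n.succPNat * coeff n (ogf size (weight (k := k) ρ) ^ k) := by
  have := finite_fiber_tuple (size (k := k)) k n
  rw [ogf_pow, coeff_ogf, coeff_ogf, mul_finsum' _ _ (Set.toFinite _),
    ← finsum_comp_equiv (nodeEquiv n)]
  refine finsum_congr fun c => ?_
  simp only [nodeEquiv, Equiv.coe_fn_mk, weight_node, c.2]

lemma eq_ogf_weight (ρ : ℕ+ → K) (f : K⟦X⟧) (h0 : constantCoeff f = 1)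
    (hf : ∀ n : ℕ, 1 ≤ n → coeff n f =
      ∑ᶠ T : {t : KTree k // t.size = n}, ((T : KTree k).hooks.map fun h => ρ h).prod) :
    f = ogf (size (k := k)) (weight ρ) := by
  ext (_ | n)
  · have hleaf (t : {t : KTree k // t.size = 0}) : t = ⟨leaf, rfl⟩ :=
      Subtype.ext (size_eq_zero_iff.1 t.2)
    rw [coeff_zero_eq_constantCoeff_apply, h0, coeff_ogf,
      finsum_eq_single _ ⟨leaf, rfl⟩ fun t ht => absurd (hleaf t) ht]
    rfl
  · rw [coeff_ogf]
    exact hf _ n.succ_pos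

end KTree

/-- Han's expansion formula for `k`-ary trees. -/
theorem expansion_formula_kary {K : Type*} [Field K] (k : ℕ) (ρ : ℕ+ → K)
    (f : PowerSeries K) (h0 : PowerSeries.constantCoeff f = 1)
    (hf : ∀ n : ℕ, 1 ≤ n → PowerSeries.coeff n f =
      ∑ᶠ T : {t : KTree k // t.size = n}, ((T : KTree k).hooks.map fun h => ρ h).prod)
    (n : ℕ+) (hne : PowerSeries.coeff ((n : ℕ) - 1) (f ^ k) ≠ 0) :
    ρ n = PowerSeries.coeff (n : ℕ) f / PowerSeries.coeff ((n : ℕ) - 1) (f ^ k) := by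
  obtain rfl := KTree.eq_ogf_weight ρ f h0 hf
  obtain ⟨m, rfl⟩ : ∃ m : ℕ, n = m.succPNat := ⟨n.natPred, n.succPNat_natPred.symm⟩
  rw [Nat.succPNat_coe, Nat.succ_sub_one] at hne ⊢
  rw [KTree.coeff_succ_ogf_weight, mul_div_cancel_right₀ _ hne]
end

section
/- Suppose ρ : ℕ⁺ → K and f(x) ∈ K[[x]] with f(0) = 0 satisfy Σ_{n≥1} (Σ_{T ∈ T(n)} ∏_{v ∈ T} ρ(h_v)) x^n/n! = f(x), where T(n) is the set of labeled rooted trees on vertex set {1,...,n}. Then for all n ≥ 1 with [x^{n-1}]e^{f(x)} ≠ 0, ρ(n) = [x^n]f(x) / [x^{n-1}]e^{f(x)}. -/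
/-!
Put `w(k) = ρ(k)` and write `T(α)`, `F(α)` for the sums of `∏ᵥ w(h_v)` over the rooted trees and
the rooted forests on a finite set `α`. Deleting the root of a tree leaves a forest on the other
vertices with the same hook lengths, and the root itself has hook length `|α|`; hence
`T(n) = n w(n) F(n-1)`. Splitting a forest into the tree through a fixed vertex and the rest gives
`F(m+1) = ∑ᵢ C(m,i) T(i+1) F(m-i)`. Since `n! [xⁿ] f = T(n)`, the equation `g' = f' g` says that
the numbers `m! [xᵐ] g` satisfy the same recursion, so `m! [xᵐ] g = F(m)`. Therefore
`n! [xⁿ] f = n ρ(n) (n-1)! [xⁿ⁻¹] g`.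
-/

/-- The parent relation associated to a parent map on `Fin n`. -/
def parentRel {n : ℕ} (p : Fin n → Option (Fin n)) : Fin n → Fin n → Prop :=
  fun a b => p a = some b

/-- A parent map on `{1, …, n}` is a (labeled rooted) forest if it has no cycles. -/
def IsRForest {n : ℕ} (p : Fin n → Option (Fin n)) : Prop :=
  ∀ v, ¬ Relation.TransGen (parentRel p) v v

/-- A labeled rooted tree on `{1, …, n}`: an acyclic parent map with a unique root. -/
def IsRTree {n : ℕ} (p : Fin n → Option (Fin n)) : Prop :=
  IsRForest p ∧ ∃! r, p r = none

/-- The hook length of `v`: the number of descendants of `v`, counting `v` itself. -/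
noncomputable def hookLen {n : ℕ} (p : Fin n → Option (Fin n)) (v : Fin n) : ℕ :=
  Nat.card {u : Fin n // Relation.ReflTransGen (parentRel p) u v}

lemma hookLen_pos {n : ℕ} (p : Fin n → Option (Fin n)) (v : Fin n) : 0 < hookLen p v :=
  @Nat.card_pos _ ⟨⟨v, Relation.ReflTransGen.refl⟩⟩ _

/-- The hook length of `v` as a positive natural number. -/
noncomputable def hook {n : ℕ} (p : Fin n → Option (Fin n)) (v : Fin n) : ℕ+ :=
  ⟨hookLen p v, hookLen_pos p v⟩

open Finset in
lemma Finset.sum_filter_mem_apply_card {M : Type*} [AddCommMonoid M] {α : Type*} [Fintype α]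
    [DecidableEq α] (a : α) (φ : ℕ → M) :
    ∑ S : Finset α with a ∈ S, φ S.card =
      ∑ i ∈ range (Fintype.card α), (Fintype.card α - 1).choose i • φ (i + 1) := by
  have has : a ∉ univ.erase a := notMem_erase a _
  rw [sum_filter, ← powerset_univ, ← insert_erase (mem_univ a),
    sum_powerset_insert has,
    sum_eq_zero fun t ht => if_neg fun h => has (mem_powerset.mp ht h), zero_add,
    sum_congr rfl fun t ht => by
      rw [if_pos (mem_insert_self a t),
        card_insert_of_notMem fun h => has (mem_powerset.mp ht h)],
    sum_powerset_apply_card (fun k => φ (k + 1)), card_erase_of_mem (mem_univ a),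
    card_univ, Nat.sub_add_cancel (Fintype.card_pos_iff.mpr ⟨a⟩)]

open PowerSeries Nat in
theorem PowerSeries.factorial_mul_coeff_succ_of_derivative_eq {R : Type*} [CommSemiring R]
    {f g : R⟦X⟧} (h : d⁄dX R g = d⁄dX R f * g) (m : ℕ) :
    ((m + 1)! : R) * coeff (m + 1) g = ∑ i ∈ Finset.range (m + 1),
      m.choose i * (((i + 1)! : R) * coeff (i + 1) f * ((m - i)! * coeff (m - i) g)) := by
  have hm := congrArg (fun F => (m ! : R) * coeff m F) h
  simp only [coeff_derivative, coeff_mul, Finset.Nat.sum_antidiagonal_eq_sum_range_succ_mk,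
    Finset.mul_sum] at hm
  rw [factorial_succ, cast_mul, cast_succ, mul_comm _ (m ! : R), mul_assoc,
    mul_comm _ (coeff _ g), hm]
  refine Finset.sum_congr rfl fun i hi => ?_
  rw [← choose_mul_factorial_mul_factorial (Finset.mem_range_succ_iff.mp hi), factorial_succ]
  push_cast
  ring

open Relation

/-- The encoding of `parentRel`, `IsRForest`, `IsRTree` and `hookLen`, over an arbitrary vertex
type instead of `Fin n`, so that forests on subsets of the vertices can be formed. -/
abbrev ParentMap (α : Type*) := α → Option α

namespace ParentMap

variable {α β : Type*}

def Parent (p : ParentMap α) (u v : α) : Prop := p u = some v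

def IsForest (p : ParentMap α) : Prop := ∀ v, ¬ TransGen p.Parent v v

def IsTree (p : ParentMap α) : Prop := p.IsForest ∧ ∃! r, p r = none

noncomputable def hookLength (p : ParentMap α) (v : α) : ℕ :=
  Nat.card {u // ReflTransGen p.Parent u v}

noncomputable instance [Finite α] : Fintype {p : ParentMap α // p.IsForest} := .ofFinite _

noncomputable instance [Finite α] : Fintype {p : ParentMap α // p.IsTree} := .ofFinite _

section Roots

variable {p : ParentMap α}

lemma Parent.eq {u v v' : α} (h : p.Parent u v) (h' : p.Parent u v') : v = v' :=
  Option.some_injective _ (h.symm.trans h')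

lemma not_parent_of_eq_none {r v : α} (hr : p r = none) : ¬ p.Parent r v := by
  simp [Parent, hr]

lemma eq_of_reflTransGen_of_eq_none {r v : α} (hr : p r = none) (h : ReflTransGen p.Parent r v) :
    r = v := by
  rcases h.cases_head with h | ⟨_, hr', _⟩
  · exact h
  · exact absurd hr' (not_parent_of_eq_none hr)

lemma reflTransGen_total {u v v' : α} (h : ReflTransGen p.Parent u v)
    (h' : ReflTransGen p.Parent u v') :
    ReflTransGen p.Parent v v' ∨ ReflTransGen p.Parent v' v := by
  induction h using ReflTransGen.head_induction_on with
  | refl => exact .inl h'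
  | head hstep h ih =>
    rcases h'.cases_head with rfl | ⟨c, hc, hcv'⟩
    · exact .inr (.head hstep h)
    · exact ih (hstep.eq hc ▸ hcv')

lemma roots_eq_of_reflTransGen {u r r' : α} (hr : p r = none) (hr' : p r' = none)
    (h : ReflTransGen p.Parent u r) (h' : ReflTransGen p.Parent u r') : r = r' := by
  rcases reflTransGen_total h h' with h | h
  · exact eq_of_reflTransGen_of_eq_none hr h
  · exact (eq_of_reflTransGen_of_eq_none hr' h).symm

lemma IsForest.exists_root [Finite α] (hp : p.IsForest) (v : α) :
    ∃ r, p r = none ∧ ReflTransGen p.Parent v r := by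
  have : Std.Irrefl (TransGen (flip p.Parent)) := ⟨fun v h => hp v (transGen_swap.mp h)⟩
  have hwf := (Finite.wellFounded_of_trans_of_irrefl (TransGen (flip p.Parent))).mono
    fun _ _ h => TransGen.single h
  induction v using hwf.induction with
  | _ v ih =>
    cases hv : p v with
    | none => exact ⟨v, hv, .refl⟩
    | some u =>
      obtain ⟨r, hr, hur⟩ := ih u hv
      exact ⟨r, hr, .head hv hur⟩

lemma IsTree.reflTransGen_root [Finite α] (hp : p.IsTree) {r : α} (hr : p r = none) (v : α) :
    ReflTransGen p.Parent v r := by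
  obtain ⟨r', hr', hvr'⟩ := hp.1.exists_root v
  rwa [hp.2.unique hr' hr] at hvr'

noncomputable def IsTree.root (hp : p.IsTree) : α := hp.2.exists.choose

lemma IsTree.root_eq_iff (hp : p.IsTree) {r : α} : hp.root = r ↔ p r = none :=
  ⟨fun h => h ▸ hp.2.exists.choose_spec, hp.2.unique hp.2.exists.choose_spec⟩

lemma IsTree.hookLength_root [Fintype α] (hp : p.IsTree) {r : α} (hr : p r = none) :
    p.hookLength r = Fintype.card α := by
  rw [hookLength, Nat.card_congr (Equiv.subtypeUnivEquiv (hp.reflTransGen_root hr)),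
    Nat.card_eq_fintype_card]

end Roots

/-- `f` identifies `q` with the restriction of `p` to a set of vertices closed under taking
children, so that descendants, and hence hook lengths, are the same in `q` and in `p`. -/
structure IsDownEmbedding (f : β → α) (q : ParentMap β) (p : ParentMap α) : Prop where
  injective : f.Injective
  parent_iff : ∀ u v, q.Parent u v ↔ p.Parent (f u) (f v)
  mem_range : ∀ u v, p.Parent u (f v) → u ∈ Set.range f

namespace IsDownEmbedding

variable {f : β → α} {q : ParentMap β} {p : ParentMap α}

lemma reflTransGen (hf : IsDownEmbedding f q p) {u v : β} (h : ReflTransGen q.Parent u v) :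
    ReflTransGen p.Parent (f u) (f v) :=
  h.lift f fun _ _ h => (hf.parent_iff _ _).mp h

lemma transGen (hf : IsDownEmbedding f q p) {u v : β} (h : TransGen q.Parent u v) :
    TransGen p.Parent (f u) (f v) :=
  h.lift f fun _ _ h => (hf.parent_iff _ _).mp h

lemma exists_reflTransGen (hf : IsDownEmbedding f q p) {u : α} {v : β}
    (h : ReflTransGen p.Parent u (f v)) : ∃ u', f u' = u ∧ ReflTransGen q.Parent u' v := by
  induction h using ReflTransGen.head_induction_on with
  | refl => exact ⟨v, rfl, .refl⟩
  | head hstep _ ih =>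
    obtain ⟨c, rfl, hc⟩ := ih
    obtain ⟨u', rfl⟩ := hf.mem_range _ _ hstep
    exact ⟨u', rfl, .head ((hf.parent_iff _ _).mpr hstep) hc⟩

lemma exists_transGen (hf : IsDownEmbedding f q p) {u : α} {v : β}
    (h : TransGen p.Parent u (f v)) : ∃ u', f u' = u ∧ TransGen q.Parent u' v := by
  induction h using TransGen.head_induction_on with
  | single hstep =>
    obtain ⟨u', rfl⟩ := hf.mem_range _ _ hstep
    exact ⟨u', rfl, .single ((hf.parent_iff _ _).mpr hstep)⟩
  | head hstep _ ih =>
    obtain ⟨c, rfl, hc⟩ := ih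
    obtain ⟨u', rfl⟩ := hf.mem_range _ _ hstep
    exact ⟨u', rfl, .head ((hf.parent_iff _ _).mpr hstep) hc⟩

lemma hookLength_eq (hf : IsDownEmbedding f q p) (v : β) :
    q.hookLength v = p.hookLength (f v) :=
  Nat.card_congr <| Equiv.ofBijective (fun u => ⟨f u, hf.reflTransGen u.2⟩)
    ⟨fun _ _ h => Subtype.ext (hf.injective (congrArg Subtype.val h)), fun u => by
      obtain ⟨u', hu', h⟩ := hf.exists_reflTransGen u.2
      exact ⟨⟨u', h⟩, Subtype.ext hu'⟩⟩

lemma isForest (hf : IsDownEmbedding f q p) (hp : p.IsForest) : q.IsForest :=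
  fun v h => hp (f v) (hf.transGen h)

lemma not_transGen_self (hf : IsDownEmbedding f q p) (hq : q.IsForest) (v : β) :
    ¬ TransGen p.Parent (f v) (f v) := fun h => by
  obtain ⟨u, hu, h⟩ := hf.exists_transGen h
  exact hq v (hf.injective hu ▸ h)

end IsDownEmbedding

def congr (e : α ≃ β) : ParentMap α ≃ ParentMap β := e.arrowCongr e.optionCongr

lemma isDownEmbedding_congr (e : α ≃ β) (p : ParentMap α) :
    IsDownEmbedding e p (congr e p) where
  injective := e.injective
  parent_iff u v := by simp [Parent, congr]
  mem_range u _ _ := e.surjective u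

lemma isForest_congr (e : α ≃ β) {p : ParentMap α} : (congr e p).IsForest ↔ p.IsForest :=
  have hf := isDownEmbedding_congr e p
  ⟨hf.isForest, fun hp v h => hf.not_transGen_self hp (e.symm v) (by simpa)⟩

lemma isTree_congr (e : α ≃ β) {p : ParentMap α} : (congr e p).IsTree ↔ p.IsTree := by
  refine and_congr (isForest_congr e) ?_
  simp only [congr, Equiv.arrowCongr_apply, Function.comp_apply, Equiv.optionCongr_apply,
    Option.map_eq_none_iff]
  exact e.symm.existsUnique_congr_right (q := fun a => p a = none)

section Restrict

variable {P : α → Prop} [DecidablePred P] {p : ParentMap α}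

variable (P) in
def restrict (p : ParentMap α) : ParentMap {v // P v} :=
  fun u => (p u).bind fun v => if h : P v then some ⟨v, h⟩ else none

lemma parent_restrict {u v : {v // P v}} : (p.restrict P).Parent u v ↔ p.Parent u v := by
  simp only [Parent, restrict, Option.bind_eq_some_iff, Option.dite_none_right_eq_some,
    Option.some.injEq]
  exact ⟨fun ⟨_, hu, _, hv⟩ => hv ▸ hu, fun h => ⟨v, h, v.2, rfl⟩⟩

lemma IsForest.restrict (hp : p.IsForest) : (p.restrict P).IsForest :=
  fun v h => hp v (h.lift Subtype.val fun _ _ => parent_restrict.mp)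

end Restrict

section AddRoot

variable [DecidableEq α] {r : α} {q : ParentMap {v // v ≠ r}}

/-- Makes `r` the parent of the roots of `q`. -/
def addRoot (r : α) (q : ParentMap {v // v ≠ r}) : ParentMap α :=
  fun v => if h : v = r then none else some (((q ⟨v, h⟩).map Subtype.val).getD r)

lemma addRoot_self : addRoot r q r = none := dif_pos rfl

lemma isDownEmbedding_addRoot : IsDownEmbedding Subtype.val q (addRoot r q) where
  injective := Subtype.val_injective
  parent_iff u v := by
    rcases hu : q u with _ | u'
    · simp [Parent, addRoot, u.2, hu, Ne.symm v.2]
    · simp [Parent, addRoot, u.2, hu, Subtype.ext_iff]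
  mem_range u _ h := ⟨⟨u, by rintro rfl; exact not_parent_of_eq_none addRoot_self h⟩, rfl⟩

lemma isTree_addRoot (hq : q.IsForest) : (addRoot r q).IsTree := by
  refine ⟨fun v h => ?_, r, addRoot_self, fun v hv => ?_⟩
  · by_cases hv : v = r
    · obtain ⟨_, hr, _⟩ := TransGen.head'_iff.mp (hv ▸ h)
      exact not_parent_of_eq_none addRoot_self hr
    · exact isDownEmbedding_addRoot.not_transGen_self hq ⟨v, hv⟩ h
  · by_contra hvr
    simp [addRoot, hvr] at hv

lemma restrict_addRoot : (addRoot r q).restrict (· ≠ r) = q := by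
  funext v
  rcases hv : q v with _ | u
  · simp [restrict, addRoot, v.2, hv]
  · simp [restrict, addRoot, v.2, hv, u.2]

lemma addRoot_restrict {p : ParentMap α} (hp : p.IsTree) (hr : p r = none) :
    addRoot r (p.restrict (· ≠ r)) = p := by
  funext v
  by_cases hvr : v = r
  · rw [hvr, addRoot_self, hr]
  rcases hv : p v with _ | u
  · exact absurd (hp.2.unique hv hr) hvr
  by_cases hur : u = r <;> simp [addRoot, restrict, hvr, hv, hur]

noncomputable def treeWithRootEquiv (r : α) :
    {p : {p : ParentMap α // p.IsTree} // p.2.root = r} ≃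
      {q : ParentMap {v // v ≠ r} // q.IsForest} where
  toFun p := ⟨p.1.1.restrict (· ≠ r), p.1.2.1.restrict⟩
  invFun q := ⟨⟨addRoot r q, isTree_addRoot q.2⟩, (IsTree.root_eq_iff _).2 addRoot_self⟩
  left_inv p := Subtype.ext <| Subtype.ext <| addRoot_restrict p.1.2 ((IsTree.root_eq_iff _).1 p.2)
  right_inv _ := Subtype.ext restrict_addRoot

end AddRoot

section Glue

variable {P : α → Prop} [DecidablePred P] {q : ParentMap {v // P v}}
  {q' : ParentMap {v // ¬ P v}}

variable (P) in
def glue (q : ParentMap {v // P v}) (q' : ParentMap {v // ¬ P v}) : ParentMap α :=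
  fun v => if h : P v then (q ⟨v, h⟩).map Subtype.val else (q' ⟨v, h⟩).map Subtype.val

lemma Parent.glue_iff {u v : α} (h : (glue P q q').Parent u v) : P u ↔ P v := by
  by_cases hu : P u <;>
    simp only [Parent, glue, hu, dite_true, dite_false, Option.map_eq_some_iff] at h <;>
    obtain ⟨x, -, rfl⟩ := h <;> simp [hu, x.2]

lemma isDownEmbedding_glue_left : IsDownEmbedding Subtype.val q (glue P q q') where
  injective := Subtype.val_injective
  parent_iff u v := by
    rw [Parent, Parent, glue, dif_pos u.2]
    exact ((Option.map_injective Subtype.val_injective).eq_iff' rfl).symm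
  mem_range u v h := ⟨⟨u, h.glue_iff.mpr v.2⟩, rfl⟩

lemma isDownEmbedding_glue_right : IsDownEmbedding Subtype.val q' (glue P q q') where
  injective := Subtype.val_injective
  parent_iff u v := by
    rw [Parent, Parent, glue, dif_neg u.2]
    exact ((Option.map_injective Subtype.val_injective).eq_iff' rfl).symm
  mem_range u v h := ⟨⟨u, h.glue_iff.not.mpr v.2⟩, rfl⟩

lemma isForest_glue (hq : q.IsForest) (hq' : q'.IsForest) : (glue P q q').IsForest := fun v => by
  by_cases hv : P v
  · exact isDownEmbedding_glue_left.not_transGen_self hq ⟨v, hv⟩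
  · exact isDownEmbedding_glue_right.not_transGen_self hq' ⟨v, hv⟩

lemma restrict_glue_left : (glue P q q').restrict P = q := by
  funext v
  rcases hv : q v with _ | u
  · simp [restrict, glue, v.2, hv]
  · simp [restrict, glue, v.2, hv, u.2]

lemma restrict_glue_right : (glue P q q').restrict (¬ P ·) = q' := by
  funext v
  rcases hv : q' v with _ | u
  · simp [restrict, glue, v.2, hv]
  · simp [restrict, glue, v.2, hv, u.2]

lemma glue_restrict {p : ParentMap α} (hP : ∀ u v, p.Parent u v → (P u ↔ P v)) :
    glue P (p.restrict P) (p.restrict (¬ P ·)) = p := by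
  funext v
  rcases hv : p v with _ | u
  · by_cases hPv : P v <;> simp [glue, restrict, hPv, hv]
  · have := hP v u hv
    by_cases hPv : P v <;> simp [glue, restrict, hPv, hv, this.mp, this.not.mp]

end Glue

section Component

variable [Fintype α] {p : ParentMap α} {a : α}

def SameTree (p : ParentMap α) (a u : α) : Prop :=
  ∃ r, p r = none ∧ ReflTransGen p.Parent a r ∧ ReflTransGen p.Parent u r

open Classical in
noncomputable def component (p : ParentMap α) (a : α) : Finset α := {u | p.SameTree a u}

lemma mem_component {u : α} : u ∈ p.component a ↔ p.SameTree a u := by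
  simp [component]

lemma IsForest.self_mem_component (hp : p.IsForest) (a : α) : a ∈ p.component a := by
  obtain ⟨r, hr, har⟩ := hp.exists_root a
  exact mem_component.mpr ⟨r, hr, har, har⟩

lemma Parent.mem_component_iff {u v : α} (h : p.Parent u v) :
    u ∈ p.component a ↔ v ∈ p.component a := by
  simp only [mem_component]
  refine ⟨fun ⟨r, hr, har, hur⟩ => ⟨r, hr, har, ?_⟩,
    fun ⟨r, hr, har, hvr⟩ => ⟨r, hr, har, .head h hvr⟩⟩
  rcases hur.cases_head with rfl | ⟨c, hc, hcr⟩
  · exact absurd h (not_parent_of_eq_none hr)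
  · exact h.eq hc ▸ hcr

variable [DecidableEq α]

lemma IsForest.isTree_restrict_component (hp : p.IsForest) {S : Finset α}
    (hS : p.component a = S) : (p.restrict (· ∈ S)).IsTree := by
  subst hS
  obtain ⟨r, hr, har⟩ := hp.exists_root a
  have hrS : r ∈ p.component a := mem_component.mpr ⟨r, hr, har, .refl⟩
  have hroot : p.restrict (· ∈ p.component a) ⟨r, hrS⟩ = none := by
    simp [ParentMap.restrict, hr]
  refine ⟨hp.restrict, ⟨r, hrS⟩, hroot, fun ⟨u, huS⟩ hu => Subtype.ext (show u = r from ?_)⟩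
  rcases hpu : p u with _ | x
  · obtain ⟨r', hr', har', hur'⟩ := mem_component.mp huS
    rw [eq_of_reflTransGen_of_eq_none hpu hur', roots_eq_of_reflTransGen hr' hr har' har]
  · have hxS : x ∈ p.component a := (Parent.mem_component_iff hpu).mp huS
    simp [ParentMap.restrict, hpu, hxS] at hu

lemma component_glue {S : Finset α} (ha : a ∈ S) {q : ParentMap {v // v ∈ S}}
    {q' : ParentMap {v // v ∉ S}} (hq : q.IsTree) :
    (glue (· ∈ S) q q').component a = S := by
  ext u
  rw [mem_component]
  constructor
  · rintro ⟨r, hr, har, hur⟩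
    have hrS : r ∈ S := by
      by_contra hrS
      obtain ⟨⟨_, haS⟩, rfl, -⟩ :=
        (isDownEmbedding_glue_right (q := q) (q' := q')).exists_reflTransGen (v := ⟨r, hrS⟩) har
      exact haS ha
    obtain ⟨⟨_, huS⟩, rfl, -⟩ :=
      (isDownEmbedding_glue_left (q := q) (q' := q')).exists_reflTransGen (v := ⟨r, hrS⟩) hur
    exact huS
  · intro hu
    obtain ⟨r, hr⟩ := hq.2.exists
    refine ⟨r, by simp [glue, r.2, hr], ?_, ?_⟩
    · exact isDownEmbedding_glue_left.reflTransGen (hq.reflTransGen_root hr ⟨a, ha⟩)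
    · exact isDownEmbedding_glue_left.reflTransGen (hq.reflTransGen_root hr ⟨u, hu⟩)

noncomputable def forestWithComponentEquiv (a : α) {S : Finset α} (ha : a ∈ S) :
    {p : {p : ParentMap α // p.IsForest} // p.1.component a = S} ≃
      {q : ParentMap {v // v ∈ S} // q.IsTree} ×
        {q : ParentMap {v // v ∉ S} // q.IsForest} where
  toFun p := (⟨p.1.1.restrict (· ∈ S), p.1.2.isTree_restrict_component p.2⟩,
    ⟨p.1.1.restrict (· ∉ S), p.1.2.restrict⟩)
  invFun x :=
    ⟨⟨glue (· ∈ S) x.1.1 x.2.1, isForest_glue x.1.2.1 x.2.2⟩, component_glue ha x.1.2⟩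
  left_inv p := Subtype.ext <| Subtype.ext <| glue_restrict fun _ _ h => p.2 ▸ h.mem_component_iff
  right_inv _ := Prod.ext (Subtype.ext restrict_glue_left) (Subtype.ext restrict_glue_right)

end Component

section Sums

variable {K : Type*} [CommSemiring K] (w : ℕ → K)

/-- A `finprod`, so that the weight does not depend on a choice of `Fintype` instance on the
vertex type. -/
noncomputable def weight (p : ParentMap α) : K := ∏ᶠ v, w (p.hookLength v)

noncomputable def treeSum (α : Type*) [Finite α] : K :=
  ∑ p : {p : ParentMap α // p.IsTree}, p.1.weight w

noncomputable def forestSum (α : Type*) [Finite α] : K :=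
  ∑ p : {p : ParentMap α // p.IsForest}, p.1.weight w

lemma weight_eq_prod [Fintype α] (p : ParentMap α) : p.weight w = ∏ v, w (p.hookLength v) :=
  finprod_eq_prod_of_fintype _

variable [Fintype α] [Fintype β]

lemma weight_congr (e : α ≃ β) (p : ParentMap α) : (congr e p).weight w = p.weight w := by
  rw [weight_eq_prod, weight_eq_prod]
  exact (Fintype.prod_equiv e _ _ fun v => by
    rw [← (isDownEmbedding_congr e p).hookLength_eq]).symm

lemma treeSum_congr (e : α ≃ β) : treeSum w α = treeSum w β :=
  Fintype.sum_equiv ((congr e).subtypeEquiv fun _ => (isTree_congr e).symm) _ _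
    fun p => (weight_congr w e p).symm

lemma forestSum_congr (e : α ≃ β) : forestSum w α = forestSum w β :=
  Fintype.sum_equiv ((congr e).subtypeEquiv fun _ => (isForest_congr e).symm) _ _
    fun p => (weight_congr w e p).symm

lemma weight_addRoot [DecidableEq α] {r : α} {q : ParentMap {v // v ≠ r}} (hq : q.IsForest) :
    (addRoot r q).weight w = w (Fintype.card α) * q.weight w := by
  rw [weight_eq_prod, weight_eq_prod, Fintype.prod_eq_mul_prod_subtype_ne _ r,
    (isTree_addRoot hq).hookLength_root addRoot_self]
  exact congrArg _ <| Fintype.prod_congr _ _ fun v => by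
    rw [isDownEmbedding_addRoot.hookLength_eq]

lemma treeSum_eq_sum_forestSum [DecidableEq α] :
    treeSum w α = ∑ r : α, w (Fintype.card α) * forestSum w {v // v ≠ r} := by
  rw [treeSum, ← Fintype.sum_fiberwise fun p : {p : ParentMap α // p.IsTree} => p.2.root]
  refine Fintype.sum_congr _ _ fun r => ?_
  rw [forestSum, Finset.mul_sum]
  exact (Fintype.sum_equiv (treeWithRootEquiv r).symm _ _ fun q => (weight_addRoot w q.2).symm).symm

lemma treeSum_fin_succ (n : ℕ) :
    treeSum w (Fin (n + 1)) = (n + 1) * w (n + 1) * forestSum w (Fin n) := by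
  have h (r : Fin (n + 1)) : forestSum w {v // v ≠ r} = forestSum w (Fin n) :=
    forestSum_congr w (Fintype.equivFinOfCardEq (by simp))
  simp [treeSum_eq_sum_forestSum, h, mul_assoc]

lemma weight_glue [DecidableEq α] {P : α → Prop} [DecidablePred P] {q : ParentMap {v // P v}}
    {q' : ParentMap {v // ¬ P v}} : (glue P q q').weight w = q.weight w * q'.weight w := by
  rw [weight_eq_prod, weight_eq_prod, weight_eq_prod, ← Fintype.prod_subtype_mul_prod_subtype P]
  congr 1 <;> refine Fintype.prod_congr _ _ fun v => ?_
  · rw [isDownEmbedding_glue_left.hookLength_eq]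
  · rw [isDownEmbedding_glue_right.hookLength_eq]

lemma forestSum_eq_sum_treeSum_mul [DecidableEq α] (a : α) :
    forestSum w α =
      ∑ S : Finset α with a ∈ S, treeSum w {v // v ∈ S} * forestSum w {v // v ∉ S} := by
  rw [forestSum,
    ← Fintype.sum_fiberwise fun p : {p : ParentMap α // p.IsForest} => p.1.component a,
    Finset.sum_filter]
  refine Fintype.sum_congr _ _ fun S => ?_
  split_ifs with ha
  · rw [treeSum, forestSum, Fintype.sum_mul_sum, ← Fintype.sum_prod_type']
    exact (Fintype.sum_equiv (forestWithComponentEquiv a ha).symm _ _ fun x =>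
      (weight_glue w).symm).symm
  · exact Fintype.sum_eq_zero _ fun p => absurd (p.2 ▸ p.1.2.self_mem_component a) ha

lemma forestSum_of_isEmpty [IsEmpty α] : forestSum w α = 1 := by
  let _ : Unique {p : ParentMap α // p.IsForest} :=
    { default := ⟨isEmptyElim, isEmptyElim⟩, uniq := fun _ => Subtype.ext (funext isEmptyElim) }
  rw [forestSum, Fintype.sum_unique, weight_eq_prod, Fintype.prod_empty]

lemma forestSum_fin_succ (m : ℕ) :
    forestSum w (Fin (m + 1)) = ∑ i ∈ Finset.range (m + 1),
      m.choose i * (treeSum w (Fin (i + 1)) * forestSum w (Fin (m - i))) := by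
  have h (S : Finset (Fin (m + 1))) : treeSum w {v // v ∈ S} * forestSum w {v // v ∉ S} =
      treeSum w (Fin S.card) * forestSum w (Fin (m + 1 - S.card)) := by
    rw [treeSum_congr w (Fintype.equivFinOfCardEq (Fintype.card_coe S)),
      forestSum_congr w (Fintype.equivFinOfCardEq (n := m + 1 - S.card)
        (by simp [Fintype.card_subtype_compl]))]
  rw [forestSum_eq_sum_treeSum_mul w 0, Finset.sum_congr rfl fun S _ => h S,
    Finset.sum_filter_mem_apply_card (0 : Fin (m + 1))
      (fun k => treeSum w (Fin k) * forestSum w (Fin (m + 1 - k)))]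
  simp [nsmul_eq_mul]

end Sums

end ParentMap

open PowerSeries Nat

theorem ParentMap.factorial_mul_coeff_eq_forestSum {K : Type*} [CommSemiring K] (w : ℕ → K)
    {f g : K⟦X⟧} (hf : ∀ n, 1 ≤ n → (n ! : K) * coeff n f = treeSum w (Fin n))
    (hg0 : constantCoeff g = 1) (hg : d⁄dX K g = d⁄dX K f * g) (m : ℕ) :
    (m ! : K) * coeff m g = forestSum w (Fin m) := by
  induction m using Nat.strong_induction_on with
  | _ m ih =>
    cases m with
    | zero => simp [hg0, forestSum_of_isEmpty]
    | succ m =>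
      rw [factorial_mul_coeff_succ_of_derivative_eq hg, forestSum_fin_succ]
      refine Finset.sum_congr rfl fun i _ => ?_
      rw [hf (i + 1) (le_add_self), ih (m - i) (by omega)]

lemma finsum_prod_hook_eq_treeSum {K : Type*} [CommSemiring K] (ρ : ℕ+ → K) (n : ℕ) :
    (∑ᶠ p : {p : Fin n → Option (Fin n) // IsRTree p}, ∏ v : Fin n, ρ (hook p.1 v)) =
      ParentMap.treeSum (fun k => ρ k.toPNat') (Fin n) := by
  change ∑ᶠ p : {p : ParentMap (Fin n) // p.IsTree}, _ = _
  rw [finsum_eq_sum_of_fintype, ParentMap.treeSum]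
  refine Fintype.sum_congr _ _ fun p => ?_
  rw [ParentMap.weight_eq_prod]
  refine Fintype.prod_congr _ _ fun v => congrArg ρ (PNat.eq ?_)
  rw [Nat.toPNat'_coe]
  exact (if_pos (hookLen_pos _ _)).symm

theorem expansion_formula_labeled_trees_general {K : Type*} [Field K] [CharZero K]
    (ρ : ℕ+ → K) (f g : PowerSeries K)
    (hf : ∀ n : ℕ, 1 ≤ n → PowerSeries.coeff n f =
      (∑ᶠ p : {p : Fin n → Option (Fin n) // IsRTree p},
        ∏ v : Fin n, ρ (hook (p : Fin n → Option (Fin n)) v)) / (n.factorial : K))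
    (hg0 : PowerSeries.constantCoeff g = 1)
    (hg : PowerSeries.derivativeFun g = PowerSeries.derivativeFun f * g)
    (n : ℕ+) (hne : PowerSeries.coeff ((n : ℕ) - 1) g ≠ 0) :
    ρ n = PowerSeries.coeff (n : ℕ) f / PowerSeries.coeff ((n : ℕ) - 1) g := by
  set w : ℕ → K := fun k => ρ k.toPNat'
  have hfact (m : ℕ) : (m ! : K) ≠ 0 := cast_ne_zero.mpr (factorial_ne_zero m)
  have hT (m : ℕ) (hm : 1 ≤ m) : (m ! : K) * coeff m f = ParentMap.treeSum w (Fin m) := by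
    rw [hf m hm, finsum_prod_hook_eq_treeSum, mul_div_cancel₀ _ (hfact m)]
  obtain ⟨k, rfl⟩ : ∃ k : ℕ, n = k.succPNat := ⟨n.natPred, n.succPNat_natPred.symm⟩
  have hcoeff :
      ((k + 1)! : K) * coeff (k + 1) f = ((k + 1)! : K) * (ρ k.succPNat * coeff k g) := by
    rw [hT (k + 1) le_add_self, ParentMap.treeSum_fin_succ,
      ← ParentMap.factorial_mul_coeff_eq_forestSum w hT hg0 hg k, factorial_succ,
      show w (k + 1) = ρ k.succPNat from rfl]
    push_cast
    ring
  simp only [succPNat_coe, succ_sub_one] at hne ⊢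
  rw [mul_left_cancel₀ (hfact _) hcoeff, mul_div_cancel_right₀ _ hne]

/-- The expansion formula for labeled rooted trees.  Here `g` plays the role of
`e^{f(x)}`, which is characterized among formal power series (over a field of
characteristic zero) by `g(0) = 1` and `g' = f' · g`. -/
theorem expansion_formula_labeled_trees {K : Type*} [Field K] [CharZero K]
    (ρ : ℕ+ → K) (f g : PowerSeries K)
    (h0 : PowerSeries.constantCoeff f = 0)
    (hf : ∀ n : ℕ, 1 ≤ n → PowerSeries.coeff n f =
      (∑ᶠ p : {p : Fin n → Option (Fin n) // IsRTree p},
        ∏ v : Fin n, ρ (hook (p : Fin n → Option (Fin n)) v)) / (n.factorial : K))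
    (hg0 : PowerSeries.constantCoeff g = 1)
    (hg : PowerSeries.derivativeFun g = PowerSeries.derivativeFun f * g)
    (n : ℕ+) (hne : PowerSeries.coeff ((n : ℕ) - 1) g ≠ 0) :
    ρ n = PowerSeries.coeff (n : ℕ) f / PowerSeries.coeff ((n : ℕ) - 1) g :=
  expansion_formula_labeled_trees_general ρ f g hf hg0 hg n hne
end

section
/- For every n ≥ 1, Σ_{T ∈ T(n)} ∏_{v ∈ T} 1/h_v = (n-1)!, where T(n) is the set of labeled rooted trees on vertex set {1,...,n}. -/
/-!
For a forest `p` on a finite set `s` let `w(p) = ∏ 1 / h_v` and `F_s(X) = ∑_p w(p) X^#roots(p)`.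
The hook lengths of the roots of a forest add up to `#s`, so `#s • F_s` is a sum over pairs
(forest, root `r`) of `h_r w(p) X^#roots(p)`. Pruning `r` leaves a forest on `s \ {r}` with the
same hooks at every other vertex, in which the children of `r` are roots; conversely any set of roots of a forest on
`s \ {r}` can be grafted onto `r`. Summing over these sets gives
`#s • F_s(X) = ∑_r X F_{s \ {r}}(X + 1)`, the recursion of the rising factorial, hence
`F_s = X (X + 1) ⋯ (X + #s - 1)`. Trees are the forests on `{1, …, n}` with a single root, so the
sum in question is the coefficient of `X` in `X (X + 1) ⋯ (X + n - 1)`, which is `(n - 1)!`.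
-/

open Relation Finset Polynomial
open scoped Classical

namespace RootedForest

variable {n : ℕ} {p p' : Fin n → Option (Fin n)} {r v : Fin n}

lemma eq_of_reflTransGen_of_eq_none (hr : p r = none) (h : ReflTransGen (parentRel p) r v) :
    r = v := by
  rcases h.cases_head with h | ⟨c, hc, -⟩
  · exact h
  · simp [parentRel, hr] at hc

lemma eq_of_reflTransGen_of_reflTransGen {a b : Fin n} (ha : p a = none) (hb : p b = none)
    (hva : ReflTransGen (parentRel p) v a) (hvb : ReflTransGen (parentRel p) v b) : a = b := by
  induction hva using ReflTransGen.head_induction_on with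
  | refl => exact eq_of_reflTransGen_of_eq_none ha hvb
  | head hvc _ ih =>
    rcases hvb.cases_head with rfl | ⟨c', hvc', hc'b⟩
    · simp [parentRel, hb] at hvc
    · exact ih (Option.some.inj (hvc.symm.trans hvc') ▸ hc'b)

lemma IsRForest.exists_root (hp : IsRForest p) (v : Fin n) :
    ∃ r, ReflTransGen (parentRel p) v r ∧ p r = none := by
  have : IsTrans _ (flip (TransGen (parentRel p))) := ⟨fun _ _ _ hab hbc => hbc.trans hab⟩
  have : Std.Irrefl (flip (TransGen (parentRel p))) := ⟨hp⟩
  have hwf := Finite.wellFounded_of_trans_of_irrefl (flip (TransGen (parentRel p)))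
  induction v using hwf.induction with | _ v ih =>
  cases hv : p v with
  | none => exact ⟨v, .refl, hv⟩
  | some w =>
    obtain ⟨r, hwr, hr⟩ := ih w (.single hv)
    exact ⟨r, .head hv hwr, hr⟩

lemma hookLen_eq_card (p : Fin n → Option (Fin n)) (v : Fin n) :
    hookLen p v = #{u | ReflTransGen (parentRel p) u v} := by
  rw [hookLen, Nat.card_eq_fintype_card, Fintype.card_subtype]

structure IsForestOn (s : Finset (Fin n)) (p : Fin n → Option (Fin n)) : Prop where
  eq_none_of_notMem : ∀ v ∉ s, p v = none
  mem_of_eq_some : ∀ {v w}, p v = some w → w ∈ s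
  isRForest : IsRForest p

noncomputable def forestsOn (s : Finset (Fin n)) : Finset (Fin n → Option (Fin n)) :=
  {p | IsForestOn s p}

def roots (s : Finset (Fin n)) (p : Fin n → Option (Fin n)) : Finset (Fin n) :=
  {v ∈ s | p v = none}

noncomputable def weight (s : Finset (Fin n)) (p : Fin n → Option (Fin n)) : ℚ :=
  ∏ v ∈ s, (hookLen p v : ℚ)⁻¹

variable {s : Finset (Fin n)}

@[simp]
lemma mem_forestsOn : p ∈ forestsOn s ↔ IsForestOn s p := by
  simp [forestsOn]

lemma IsForestOn.mem_of_reflTransGen (hp : IsForestOn s p) (hv : v ∈ s)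
    {u : Fin n} (h : ReflTransGen (parentRel p) u v) : u ∈ s := by
  rcases h.cases_head with rfl | ⟨c, hc, -⟩
  · exact hv
  · by_contra hu
    simp [parentRel, hp.eq_none_of_notMem u hu] at hc

lemma IsForestOn.sum_hookLen_roots (hp : IsForestOn s p) :
    ∑ r ∈ roots s p, hookLen p r = #s := by
  choose root hroot using IsRForest.exists_root hp.isRForest
  have hmaps : ∀ v ∈ s, root v ∈ roots s p := by
    intro v hv
    refine mem_filter.2 ⟨?_, (hroot v).2⟩
    rcases (hroot v).1.cases_tail with h | ⟨c, -, hc⟩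
    · rwa [h]
    · exact hp.mem_of_eq_some hc
  rw [card_eq_sum_card_fiberwise hmaps]
  refine sum_congr rfl fun r hr => ?_
  obtain ⟨hrs, hr⟩ := mem_filter.1 hr
  rw [hookLen_eq_card]
  congr 1
  ext u
  simp only [mem_filter, mem_univ, true_and]
  refine ⟨fun hur => ⟨hp.mem_of_reflTransGen hrs hur,
    eq_of_reflTransGen_of_reflTransGen (hroot u).2 hr (hroot u).1 hur⟩, ?_⟩
  rintro ⟨-, rfl⟩
  exact (hroot u).1

def IsPrunedAt (r : Fin n) (p p' : Fin n → Option (Fin n)) : Prop :=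
  ∀ a b, p' a = some b ↔ p a = some b ∧ b ≠ r

section IsPrunedAt

variable (hr : p r = none) (h : IsPrunedAt r p p')
include hr h

lemma reflTransGen_iff_of_isPrunedAt (hv : v ≠ r) (u : Fin n) :
    ReflTransGen (parentRel p) u v ↔ ReflTransGen (parentRel p') u v := by
  refine ⟨fun hu => ?_, ReflTransGen.mono (fun a b hab => ((h a b).1 hab).1) u v⟩
  induction hu using ReflTransGen.head_induction_on with
  | refl => exact .refl
  | head hac hcv ih =>
    refine .head ((h _ _).2 ⟨hac, ?_⟩) ih
    rintro rfl
    exact hv (eq_of_reflTransGen_of_eq_none hr hcv).symm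

lemma hookLen_eq_of_isPrunedAt (hv : v ≠ r) : hookLen p v = hookLen p' v := by
  simp only [hookLen_eq_card, reflTransGen_iff_of_isPrunedAt hr h hv]

lemma isRForest_iff_of_isPrunedAt : IsRForest p ↔ IsRForest p' := by
  refine ⟨fun hp v hv => hp v (TransGen.mono (fun a b hab => ((h a b).1 hab).1) v v hv),
    fun hp' v hv => ?_⟩
  -- a path of `p` that does not end at the root `r` uses no edge into `r`
  have key : ∀ {a b}, TransGen (parentRel p) a b → b = r ∨ TransGen (parentRel p') a b := by
    intro a b hab
    induction hab with
    | @single c hac =>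
      by_cases hc : c = r
      · exact .inl hc
      · exact .inr (.single ((h _ _).2 ⟨hac, hc⟩))
    | @tail b c _ hbc ih =>
      by_cases hc : c = r
      · exact .inl hc
      · rcases ih with rfl | ih
        · simp [parentRel, hr] at hbc
        · exact .inr (ih.tail ((h _ _).2 ⟨hbc, hc⟩))
  rcases key hv with rfl | hv'
  · obtain ⟨c, hc, -⟩ := TransGen.head'_iff.1 hv
    simp [parentRel, hr] at hc
  · exact hp' v hv'

lemma hookLen_mul_weight_of_isPrunedAt (hrs : r ∈ s) :
    hookLen p r * weight s p = weight (s.erase r) p' := by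
  rw [weight, ← mul_prod_erase s _ hrs, ← mul_assoc,
    mul_inv_cancel₀ (Nat.cast_ne_zero.2 (hookLen_pos p r).ne'), one_mul, weight]
  refine prod_congr rfl fun v hv => ?_
  rw [hookLen_eq_of_isPrunedAt hr h (ne_of_mem_erase hv)]

end IsPrunedAt

def prune (r : Fin n) (p : Fin n → Option (Fin n)) : Fin n → Option (Fin n) :=
  fun v => if p v = some r then none else p v

def graft (r : Fin n) (S : Finset (Fin n)) (p : Fin n → Option (Fin n)) :
    Fin n → Option (Fin n) :=
  fun v => if v ∈ S then some r else p v

noncomputable def children (r : Fin n) (p : Fin n → Option (Fin n)) : Finset (Fin n) :=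
  {c | p c = some r}

lemma isPrunedAt_prune (r : Fin n) (p : Fin n → Option (Fin n)) :
    IsPrunedAt r p (prune r p) := by
  intro a b
  by_cases ha : p a = some r <;> simp only [prune, ha, if_true, if_false]
  · simp only [reduceCtorEq, false_iff, Option.some.injEq, not_and, not_not]
    exact fun h => h.symm
  · exact ⟨fun hb => ⟨hb, by rintro rfl; exact ha hb⟩, And.left⟩

lemma isForestOn_erase_prune (hp : IsForestOn s p) (hr : p r = none) :
    IsForestOn (s.erase r) (prune r p) where
  eq_none_of_notMem v hv := by
    unfold prune
    split_ifs with h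
    · rfl
    · by_cases hvr : v = r
      · rwa [hvr]
      · exact hp.eq_none_of_notMem v fun hvs => hv (mem_erase.2 ⟨hvr, hvs⟩)
  mem_of_eq_some h := by
    obtain ⟨h, hw⟩ := (isPrunedAt_prune r p _ _).1 h
    exact mem_erase.2 ⟨hw, hp.mem_of_eq_some h⟩
  isRForest := (isRForest_iff_of_isPrunedAt hr (isPrunedAt_prune r p)).1 hp.isRForest

lemma children_subset_roots_prune (hp : IsForestOn s p) (hr : p r = none) :
    children r p ⊆ roots (s.erase r) (prune r p) := by
  intro c hc
  have hc : p c = some r := (mem_filter.1 hc).2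
  refine mem_filter.2 ⟨mem_erase.2 ⟨?_, ?_⟩, by simp [prune, hc]⟩
  · rintro rfl
    simp [hr] at hc
  · by_contra hcs
    simp [hp.eq_none_of_notMem c hcs] at hc

lemma graft_prune : graft r (children r p) (prune r p) = p := by
  funext v
  by_cases h : p v = some r <;> simp [graft, prune, children, h]

lemma children_graft {S : Finset (Fin n)} (hp' : IsForestOn (s.erase r) p') :
    children r (graft r S p') = S := by
  ext c
  simp only [children, mem_filter_univ]
  by_cases hc : c ∈ S
  · simp [graft, hc]
  · simp only [graft, hc, if_false, iff_false]
    exact fun h => notMem_erase r s (hp'.mem_of_eq_some h)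

section graft

variable {S : Finset (Fin n)} (hp' : IsForestOn (s.erase r) p') (hS : S ⊆ roots (s.erase r) p')
include hp' hS

lemma graft_apply_self : graft r S p' r = none := by
  have hrS : r ∉ S := fun h => notMem_erase r s (mem_filter.1 (hS h)).1
  simp only [graft, hrS, if_false]
  exact hp'.eq_none_of_notMem r (notMem_erase r s)

lemma isPrunedAt_graft : IsPrunedAt r (graft r S p') p' := by
  intro a b
  by_cases ha : a ∈ S
  · have : p' a = none := (mem_filter.1 (hS ha)).2
    simp [graft, ha, this, eq_comm]
  · simp only [graft, ha, if_false]
    exact ⟨fun h => ⟨h, ne_of_mem_erase (hp'.mem_of_eq_some h)⟩, And.left⟩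

lemma isForestOn_graft (hr : r ∈ s) : IsForestOn s (graft r S p') where
  eq_none_of_notMem v hv := by
    have hvS : v ∉ S := fun h => hv (mem_of_mem_erase (mem_filter.1 (hS h)).1)
    simp only [graft, hvS, if_false]
    exact hp'.eq_none_of_notMem v fun h => hv (mem_of_mem_erase h)
  mem_of_eq_some {v w} h := by
    by_cases hw : w = r
    · exact hw ▸ hr
    · exact mem_of_mem_erase (hp'.mem_of_eq_some ((isPrunedAt_graft hp' hS v w).2 ⟨h, hw⟩))
  isRForest := (isRForest_iff_of_isPrunedAt (graft_apply_self hp' hS)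
    (isPrunedAt_graft hp' hS)).2 hp'.isRForest

lemma prune_graft : prune r (graft r S p') = p' := by
  funext v
  by_cases hv : graft r S p' v = some r
  · have hvS : v ∈ S := by
      by_contra hvS
      simp only [graft, hvS, if_false] at hv
      exact notMem_erase r s (hp'.mem_of_eq_some hv)
    simp [prune, hv, (mem_filter.1 (hS hvS)).2]
  · have hvS : v ∉ S := fun hvS => hv (by simp [graft, hvS])
    rw [prune, if_neg hv, graft, if_neg hvS]

lemma roots_graft (hr : r ∈ s) :
    roots s (graft r S p') = insert r (roots (s.erase r) p' \ S) := by
  ext v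
  simp only [roots, mem_insert, mem_sdiff, mem_filter, mem_erase]
  by_cases hvr : v = r
  · subst hvr
    simp [hr, graft_apply_self hp' hS]
  · by_cases hvS : v ∈ S <;> simp [graft, hvr, hvS]

end graft

lemma sum_forestsOn_root_eq_sum_graft {M : Type*} [AddCommMonoid M] (hr : r ∈ s)
    (f : (Fin n → Option (Fin n)) → M) :
    ∑ p ∈ forestsOn s with p r = none, f p =
      ∑ p' ∈ forestsOn (s.erase r), ∑ S ∈ (roots (s.erase r) p').powerset, f (graft r S p') := by
  rw [sum_sigma']
  refine sum_nbij' (fun p => ⟨prune r p, children r p⟩) (fun x => graft r x.2 x.1)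
    (fun p hp => ?_) (fun x hx => ?_) (fun p _ => graft_prune) (fun x hx => ?_) (fun p _ => ?_)
  · obtain ⟨hp, hpr⟩ := mem_filter.1 hp
    simp only [mem_sigma, mem_forestsOn, mem_powerset] at hp ⊢
    exact ⟨isForestOn_erase_prune hp hpr, children_subset_roots_prune hp hpr⟩
  · simp only [mem_sigma, mem_forestsOn, mem_powerset] at hx
    exact mem_filter.2 ⟨mem_forestsOn.2 (isForestOn_graft hx.1 hx.2 hr),
      graft_apply_self hx.1 hx.2⟩
  · simp only [mem_sigma, mem_forestsOn, mem_powerset] at hx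
    rw [prune_graft hx.1 hx.2, children_graft hx.1]
  · rw [graft_prune]

noncomputable def forestPoly (s : Finset (Fin n)) : ℚ[X] :=
  ∑ p ∈ forestsOn s, C (weight s p) * X ^ #(roots s p)

lemma sum_forestsOn_root (hr : r ∈ s) :
    ∑ p ∈ forestsOn s with p r = none, C (hookLen p r * weight s p) * X ^ #(roots s p) =
      X * (forestPoly (s.erase r)).comp (X + 1) := by
  rw [sum_forestsOn_root_eq_sum_graft hr, forestPoly, Polynomial.sum_comp, mul_sum]
  refine sum_congr rfl fun p' hp' => ?_
  have hp' := mem_forestsOn.1 hp'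
  set A := roots (s.erase r) p'
  have hrA : r ∉ A := fun h => notMem_erase r s (mem_filter.1 h).1
  trans ∑ S ∈ A.powerset, C (weight (s.erase r) p') * X * X ^ (#A - #S)
  · refine sum_congr rfl fun S hS => ?_
    have hS := mem_powerset.1 hS
    have hgraft := isPrunedAt_graft hp' hS
    rw [hookLen_mul_weight_of_isPrunedAt (graft_apply_self hp' hS) hgraft hr,
      roots_graft hp' hS hr, card_insert_of_notMem (fun h => hrA (mem_sdiff.1 h).1),
      card_sdiff_of_subset hS, pow_succ]
    ring
  · have := sum_pow_mul_eq_add_pow (1 : ℚ[X]) X A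
    simp only [one_pow, one_mul] at this
    rw [← mul_sum, this]
    simp only [mul_comp, C_comp, X_pow_comp]
    ring

lemma natCast_card_mul_forestPoly (s : Finset (Fin n)) :
    (#s : ℚ[X]) * forestPoly s = ∑ r ∈ s, X * (forestPoly (s.erase r)).comp (X + 1) :=
  calc (#s : ℚ[X]) * forestPoly s
      = ∑ p ∈ forestsOn s, ∑ r ∈ roots s p,
          C (hookLen p r * weight s p) * X ^ #(roots s p) := by
        rw [forestPoly, mul_sum]
        refine sum_congr rfl fun p hp => ?_
        rw [← sum_mul, ← map_sum, ← sum_mul, ← Nat.cast_sum,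
          (mem_forestsOn.1 hp).sum_hookLen_roots, map_mul, map_natCast, mul_assoc]
    _ = ∑ r ∈ s, ∑ p ∈ forestsOn s with p r = none,
          C (hookLen p r * weight s p) * X ^ #(roots s p) :=
        sum_comm' fun p r => by simp only [roots, mem_filter]; tauto
    _ = ∑ r ∈ s, X * (forestPoly (s.erase r)).comp (X + 1) :=
        sum_congr rfl fun _ hr => sum_forestsOn_root hr

lemma forestsOn_empty : forestsOn (∅ : Finset (Fin n)) = {fun _ => none} := by
  ext p
  rw [mem_forestsOn, mem_singleton]
  constructor
  · exact fun hp => funext fun v => hp.eq_none_of_notMem v (notMem_empty v)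
  · rintro rfl
    refine ⟨fun _ _ => rfl, fun h => by simp at h, fun v hv => ?_⟩
    obtain ⟨c, hc, -⟩ := TransGen.head'_iff.1 hv
    simp [parentRel] at hc

theorem forestPoly_eq_ascPochhammer (s : Finset (Fin n)) :
    forestPoly s = ascPochhammer ℚ #s := by
  induction h : #s generalizing s with
  | zero =>
    rw [card_eq_zero.1 h, forestPoly, forestsOn_empty]
    simp [weight, roots]
  | succ m ih =>
    refine mul_left_cancel₀ (Nat.cast_ne_zero.2 (h ▸ m.succ_ne_zero) : (#s : ℚ[X]) ≠ 0) ?_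
    rw [natCast_card_mul_forestPoly, sum_congr rfl fun r hr =>
      by rw [ih (s.erase r) (by rw [card_erase_of_mem hr, h, Nat.add_sub_cancel])],
      sum_const, h, ascPochhammer_succ_left, nsmul_eq_mul]

lemma coeff_one_ascPochhammer_succ (S : Type*) [CommSemiring S] (m : ℕ) :
    (ascPochhammer S (m + 1)).coeff 1 = m.factorial := by
  rw [ascPochhammer_succ_left, ← zero_add 1, coeff_X_mul, coeff_zero_eq_eval_zero, eval_comp]
  simp

lemma isRTree_iff {p : Fin n → Option (Fin n)} :
    IsRTree p ↔ IsForestOn univ p ∧ #(roots univ p) = 1 := by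
  rw [card_eq_one_iff_existsUnique]
  simp only [roots, mem_filter, mem_univ, true_and]
  exact and_congr_left' ⟨fun hp => ⟨fun v hv => absurd (mem_univ v) hv, fun _ => mem_univ _, hp⟩,
    IsForestOn.isRForest⟩

lemma coeff_one_forestPoly_univ :
    (forestPoly (univ : Finset (Fin n))).coeff 1 =
      ∑ p : Fin n → Option (Fin n) with IsRTree p, weight univ p := by
  simp only [forestPoly, finsetSum_coeff, coeff_C_mul_X_pow, eq_comm (a := 1)]
  rw [← sum_filter, forestsOn, filter_filter]
  simp only [isRTree_iff]

end RootedForest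

open RootedForest in
/-- The hook length formula for labeled rooted trees. -/
theorem hook_formula_labeled_trees (n : ℕ) (hn : 1 ≤ n) :
    ∑ᶠ p : {p : Fin n → Option (Fin n) // IsRTree p},
      ∏ v : Fin n, 1 / (hookLen (p : Fin n → Option (Fin n)) v : ℚ)
    = ((n - 1).factorial : ℚ) := by
  obtain ⟨m, rfl⟩ : ∃ m, n = m + 1 := ⟨n - 1, by omega⟩
  calc ∑ᶠ p : {p : Fin (m + 1) → Option (Fin (m + 1)) // IsRTree p},
        ∏ v : Fin (m + 1), 1 / (hookLen (p : Fin (m + 1) → Option (Fin (m + 1))) v : ℚ)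
      = ∑ p : Fin (m + 1) → Option (Fin (m + 1)) with IsRTree p, weight univ p := by
        rw [finsum_eq_sum_of_fintype, ← sum_subtype _ (fun _ => mem_filter_univ _)
          (fun p => ∏ v, 1 / (hookLen p v : ℚ))]
        simp only [weight, one_div]
    _ = m.factorial := by
        rw [← coeff_one_forestPoly_univ, forestPoly_eq_ascPochhammer, card_univ,
          Fintype.card_fin, coeff_one_ascPochhammer_succ]
    _ = ((m + 1 - 1).factorial : ℚ) := by simp
end

section
/- For every n ≥ 1, (1/n!) · Σ_{F ∈ F(n)} ∏_{v ∈ F} 2(2h_v − 2)!! / (h_v · (2h_v − 3)!!) = C(2n, n), where F(n) is the set of labeled rooted forests on vertex set {1,...,n}, m!! = m(m−2)(m−4)··· with 0!! = (−1)!! = 1, and C(2n,n) is the central binomial coefficient. -/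
/-!
Write `w h = 2 (2h-2)!! / (h (2h-3)!!)` and `G T` for the sum over the forests on `T` of
`∏ w(h_v)`. Fix `a ∈ T`, and let `S` be the vertex set and `r` the root of the tree
containing `a`. Deleting `r` leaves a forest on `S \ {r}`, the other trees form a forest on
`T \ S`, and this is a bijection under which all hooks are kept except `h_r = |S|`. Hence
`G T = ∑_{a ∈ S ⊆ T} ∑_{r ∈ S} w |S| · G (S \ {r}) · G (T \ S)`.
Since `(k+1) w (k+1) = 2 · 4^k / C(2k, k)`, the identity
`2 ∑_{k ≤ m} 4^k C(2(m-k), m-k) = (m+1) C(2m+2, m+1)` turns this recursion into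
`G T = |T|! C(2|T|, |T|)` by induction on `|T|`.
-/

open Relation Finset

theorem Finset.sum_sum_filter_of_existsUnique {ι κ M : Type*} [AddCommMonoid M] {s : Finset ι}
    {t : Finset κ} (C : ι → κ → Prop) [∀ i k, Decidable (C i k)]
    (h : ∀ i ∈ s, ∃! k, k ∈ t ∧ C i k) (f : ι → M) :
    ∑ k ∈ t, ∑ i ∈ s with C i k, f i = ∑ i ∈ s, f i := by
  rw [sum_comm' (t' := s) (s' := fun i => {k ∈ t | C i k}) (by simp only [mem_filter]; tauto)]
  refine sum_congr rfl fun i hi => ?_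
  have : #{k ∈ t | C i k} = 1 := by
    simpa only [card_eq_one_iff_existsUnique, mem_filter] using h i hi
  rw [sum_const, this, one_nsmul]

theorem Finset.sum_powerset_filter_mem {α M : Type*} [DecidableEq α] [AddCommMonoid M]
    {T : Finset α} {a : α} (ha : a ∈ T) (g : Finset α → M) :
    ∑ S ∈ T.powerset with a ∈ S, g S = ∑ S ∈ (T.erase a).powerset, g (insert a S) := by
  conv_lhs => rw [sum_filter, ← insert_erase ha, sum_powerset_insert (notMem_erase a T)]
  rw [sum_eq_zero fun S hS => if_neg fun haS => notMem_erase a T (mem_powerset.mp hS haS),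
    zero_add]
  exact sum_congr rfl fun S _ => if_pos (mem_insert_self a S)

section Roots

variable {n : ℕ} {p : Fin n → Option (Fin n)}

lemma parentRel_rightUnique (p : Fin n → Option (Fin n)) : Relator.RightUnique (parentRel p) :=
  fun _ _ _ h₁ h₂ => Option.some.inj (h₁.symm.trans h₂)

lemma eq_of_reflTransGen_of_eq_none {r u : Fin n} (hr : p r = none)
    (h : ReflTransGen (parentRel p) r u) : u = r := by
  rcases h.cases_head with rfl | ⟨c, hc, -⟩
  · rfl
  · simp [parentRel, hr] at hc

lemma eq_of_reflTransGen_of_roots {v r r' : Fin n} (hr : p r = none) (hr' : p r' = none)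
    (h : ReflTransGen (parentRel p) v r) (h' : ReflTransGen (parentRel p) v r') : r = r' := by
  rcases h.total_of_right_unique (parentRel_rightUnique p) h' with h | h
  · exact (eq_of_reflTransGen_of_eq_none hr h).symm
  · exact eq_of_reflTransGen_of_eq_none hr' h

lemma reflTransGen_of_parent_of_root {u v r : Fin n} (huv : p u = some v)
    (h : ReflTransGen (parentRel p) u r) (hr : p r = none) : ReflTransGen (parentRel p) v r := by
  rcases (ReflTransGen.single (r := parentRel p) huv).total_of_right_unique
    (parentRel_rightUnique p) h with h | h
  · exact h
  · rw [eq_of_reflTransGen_of_eq_none hr h]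

lemma isRForest_iff_forall_exists_root :
    IsRForest p ↔ ∀ v, ∃ r, ReflTransGen (parentRel p) v r ∧ p r = none := by
  constructor
  · intro hp v
    have : Std.Irrefl (TransGen (flip (parentRel p))) :=
      ⟨fun v hv => hp v (transGen_swap.mp hv)⟩
    have hwf : WellFounded (flip (parentRel p)) :=
      (Finite.wellFounded_of_trans_of_irrefl _).mono fun _ _ => TransGen.single
    induction v using hwf.induction with
    | _ v ih =>
      cases hv : p v with
      | none => exact ⟨v, .refl, hv⟩
      | some c =>
        obtain ⟨r, hcr, hr⟩ := ih c hv
        exact ⟨r, .head hv hcr, hr⟩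
  · intro h v hv
    obtain ⟨r, hvr, hr⟩ := h v
    induction hvr using ReflTransGen.head_induction_on with
    | refl =>
      obtain ⟨c, hc, -⟩ := TransGen.head'_iff.mp hv
      simp [parentRel, hr] at hc
    | head hvc _ ih =>
      obtain ⟨c, hc, hcv⟩ := TransGen.head'_iff.mp hv
      cases parentRel_rightUnique p hvc hc
      exact ih (TransGen.tail' hcv hvc)

lemma IsRForest.mono {q : Fin n → Option (Fin n)} (hp : IsRForest p)
    (hqp : ∀ x y, q x = some y → p x = some y) : IsRForest q :=
  fun v hv => hp v (TransGen.mono (fun x y => hqp x y) v v hv)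

end Roots

section Support

variable {n : ℕ} {p q : Fin n → Option (Fin n)} {D T : Finset (Fin n)}

def IsSupportedOn (T : Finset (Fin n)) (p : Fin n → Option (Fin n)) : Prop :=
  ∀ x y, p x = some y → x ∈ T ∧ y ∈ T

lemma IsSupportedOn.eq_none (hp : IsSupportedOn T p) {x : Fin n} (hx : x ∉ T) : p x = none :=
  Option.eq_none_iff_forall_some_ne.mpr fun y hy => hx (hp x y hy.symm).1

lemma mem_of_reflTransGen_of_mem (hD : ∀ x y, p x = some y → x ∈ D → y ∈ D) {u v : Fin n}
    (h : ReflTransGen (parentRel p) u v) (hu : u ∈ D) : v ∈ D := by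
  induction h with
  | refl => exact hu
  | tail _ hbc ih => exact hD _ _ hbc ih

lemma reflTransGen_of_edges_into (hD : ∀ x y, y ∈ D → p x = some y → x ∈ D)
    (hpq : ∀ x, ∀ y ∈ D, p x = some y → q x = some y) {u v : Fin n} (hv : v ∈ D)
    (h : ReflTransGen (parentRel p) u v) : u ∈ D ∧ ReflTransGen (parentRel q) u v := by
  induction h using ReflTransGen.head_induction_on with
  | refl => exact ⟨hv, .refl⟩
  | head huc _ ih =>
    obtain ⟨hc, hcv⟩ := ih
    exact ⟨hD _ _ hc huc, .head (hpq _ _ hc huc) hcv⟩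

lemma reflTransGen_congr_of_edges_into (hD : ∀ x y, y ∈ D → p x = some y → x ∈ D)
    (hpq : ∀ x, ∀ y ∈ D, p x = some y ↔ q x = some y) {u v : Fin n} (hv : v ∈ D) :
    ReflTransGen (parentRel p) u v ↔ ReflTransGen (parentRel q) u v :=
  ⟨fun h => (reflTransGen_of_edges_into hD (fun x y hy => (hpq x y hy).1) hv h).2,
    fun h => (reflTransGen_of_edges_into (fun x y hy hxy => hD x y hy ((hpq x y hy).2 hxy))
      (fun x y hy => (hpq x y hy).2) hv h).2⟩

lemma hookLen_congr {v w : Fin n}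
    (h : ∀ u, ReflTransGen (parentRel p) u v ↔ ReflTransGen (parentRel q) u w) :
    hookLen p v = hookLen q w :=
  Nat.card_congr (Equiv.subtypeEquivRight h)

lemma hookLen_eq_card {S : Finset (Fin n)} {v : Fin n}
    (hS : ∀ u, u ∈ S ↔ ReflTransGen (parentRel p) u v) : hookLen p v = #S :=
  (Nat.card_congr (Equiv.subtypeEquivRight fun u => (hS u).symm)).trans
    (Nat.card_eq_finsetCard S)

open Classical in
/-- The forests on the vertex set `T`, encoded as parent maps on `Fin n` in which every vertex
outside `T` is an isolated root. -/
noncomputable def forestsOn (T : Finset (Fin n)) : Finset (Fin n → Option (Fin n)) :=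
  {p | IsRForest p ∧ IsSupportedOn T p}

lemma mem_forestsOn : p ∈ forestsOn T ↔ IsRForest p ∧ IsSupportedOn T p := by
  simp [forestsOn]

end Support

/-- For `h = 1` the truncated subtraction gives `(2h-3)!! = 0!! = 1`, which is the convention
`(-1)!! = 1`. -/
noncomputable def hookWeight (h : ℕ) : ℚ :=
  2 * (Nat.doubleFactorial (2 * h - 2) : ℚ) /
    ((h : ℚ) * (Nat.doubleFactorial (2 * h - 3) : ℚ))

noncomputable def forestWeight {n : ℕ} (T : Finset (Fin n)) : ℚ :=
  ∑ p ∈ forestsOn T, ∏ v ∈ T, hookWeight (hookLen p v)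

lemma forestWeight_empty {n : ℕ} : forestWeight (∅ : Finset (Fin n)) = 1 := by
  have h : forestsOn (∅ : Finset (Fin n)) = {fun _ => none} := by
    ext p
    rw [mem_forestsOn, mem_singleton]
    constructor
    · rintro ⟨-, hp⟩
      exact funext fun x => hp.eq_none (notMem_empty x)
    · rintro rfl
      exact ⟨isRForest_iff_forall_exists_root.mpr fun v => ⟨v, .refl, rfl⟩,
        fun _ _ h => by cases h⟩
  simp [forestWeight, h]

section Graft

variable {n : ℕ} {T S : Finset (Fin n)} {r : Fin n} {p₁ p₂ : Fin n → Option (Fin n)}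

/-- The forest `p₂` next to the tree on `S` obtained by hanging the trees of `p₁` below the root
`r`. -/
def graft (S : Finset (Fin n)) (r : Fin n) (p₁ p₂ : Fin n → Option (Fin n)) :
    Fin n → Option (Fin n) :=
  fun x => if x ∈ S.erase r then some ((p₁ x).getD r) else p₂ x

lemma graft_of_mem {x : Fin n} (hx : x ∈ S.erase r) :
    graft S r p₁ p₂ x = some ((p₁ x).getD r) :=
  if_pos hx

lemma graft_of_notMem {x : Fin n} (hx : x ∉ S.erase r) : graft S r p₁ p₂ x = p₂ x :=
  if_neg hx

lemma graft_root (hr : r ∈ S) (h₂ : IsSupportedOn (T \ S) p₂) :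
    graft S r p₁ p₂ r = none := by
  rw [graft_of_notMem (notMem_erase r S)]
  exact h₂.eq_none fun h => (mem_sdiff.mp h).2 hr

lemma getD_mem_of_isSupportedOn_erase (hr : r ∈ S) (h₁ : IsSupportedOn (S.erase r) p₁)
    (x : Fin n) : (p₁ x).getD r ∈ S := by
  cases hx : p₁ x with
  | none => exact hr
  | some z => exact mem_of_mem_erase (h₁ x z hx).2

lemma graft_mem_iff (hr : r ∈ S) (h₁ : IsSupportedOn (S.erase r) p₁)
    (h₂ : IsSupportedOn (T \ S) p₂) {u y : Fin n} (h : graft S r p₁ p₂ u = some y) :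
    y ∈ S ↔ u ∈ S := by
  by_cases hu : u ∈ S.erase r
  · rw [graft_of_mem hu, Option.some_inj] at h
    exact iff_of_true (h ▸ getD_mem_of_isSupportedOn_erase hr h₁ u) (mem_of_mem_erase hu)
  · rw [graft_of_notMem hu] at h
    exact iff_of_false (mem_sdiff.mp (h₂ u y h).2).2 (mem_sdiff.mp (h₂ u y h).1).2

lemma isSupportedOn_graft (hST : S ⊆ T) (hr : r ∈ S) (h₁ : IsSupportedOn (S.erase r) p₁)
    (h₂ : IsSupportedOn (T \ S) p₂) : IsSupportedOn T (graft S r p₁ p₂) := by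
  intro u y h
  by_cases hu : u ∈ S.erase r
  · exact ⟨hST (mem_of_mem_erase hu),
      hST ((graft_mem_iff hr h₁ h₂ h).mpr (mem_of_mem_erase hu))⟩
  · rw [graft_of_notMem hu] at h
    exact ⟨sdiff_subset (h₂ u y h).1, sdiff_subset (h₂ u y h).2⟩

lemma graft_reflTransGen_iff_of_mem_erase (hr : r ∈ S) (h₁ : IsSupportedOn (S.erase r) p₁)
    (h₂ : IsSupportedOn (T \ S) p₂) {u v : Fin n} (hv : v ∈ S.erase r) :
    ReflTransGen (parentRel (graft S r p₁ p₂)) u v ↔ ReflTransGen (parentRel p₁) u v := by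
  refine reflTransGen_congr_of_edges_into (fun x y hy h => mem_erase.mpr ⟨?_, ?_⟩)
    (fun x y hy => ?_) hv
  · rintro rfl
    simp [graft_root hr h₂] at h
  · exact (graft_mem_iff hr h₁ h₂ h).mp (mem_of_mem_erase hy)
  by_cases hx : x ∈ S.erase r
  · rw [graft_of_mem hx]
    cases p₁ x with
    | none => simpa using (ne_of_mem_erase hy).symm
    | some z => simp
  · rw [graft_of_notMem hx, h₁.eq_none hx]
    simpa using fun h => (mem_sdiff.mp (h₂ x y h).2).2 (mem_of_mem_erase hy)

lemma graft_reflTransGen_iff_of_notMem (hr : r ∈ S) (h₁ : IsSupportedOn (S.erase r) p₁)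
    (h₂ : IsSupportedOn (T \ S) p₂) {u v : Fin n} (hv : v ∉ S) :
    ReflTransGen (parentRel (graft S r p₁ p₂)) u v ↔ ReflTransGen (parentRel p₂) u v := by
  refine reflTransGen_congr_of_edges_into (D := Sᶜ) (fun x y hy h => mem_compl.mpr fun hx =>
    mem_compl.mp hy ((graft_mem_iff hr h₁ h₂ h).mpr hx)) (fun x y hy => ?_) (mem_compl.mpr hv)
  by_cases hx : x ∈ S.erase r
  · rw [graft_of_mem hx, Option.some_inj]
    refine iff_of_false (fun h => mem_compl.mp hy (h ▸ getD_mem_of_isSupportedOn_erase hr h₁ x))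
      fun h => ?_
    exact (mem_sdiff.mp (h₂ x y h).1).2 (mem_of_mem_erase hx)
  · rw [graft_of_notMem hx]

lemma graft_reflTransGen_root_iff (hr : r ∈ S) (h₁ : IsSupportedOn (S.erase r) p₁)
    (h₂ : IsSupportedOn (T \ S) p₂) (hp₁ : IsRForest p₁) (u : Fin n) :
    ReflTransGen (parentRel (graft S r p₁ p₂)) u r ↔ u ∈ S := by
  refine ⟨fun h => (reflTransGen_of_edges_into (q := graft S r p₁ p₂)
    (fun x y hy h => (graft_mem_iff hr h₁ h₂ h).mp hy) (fun _ _ _ => id) hr h).1,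
    fun hu => ?_⟩
  by_cases hur : u = r
  · exact hur ▸ .refl
  obtain ⟨r₁, hur₁, hr₁⟩ := isRForest_iff_forall_exists_root.mp hp₁ u
  have hr₁S : r₁ ∈ S.erase r := mem_of_reflTransGen_of_mem (fun x y hxy _ => (h₁ x y hxy).2)
    hur₁ (mem_erase.mpr ⟨hur, hu⟩)
  refine ((graft_reflTransGen_iff_of_mem_erase hr h₁ h₂ hr₁S).mpr hur₁).tail ?_
  show graft S r p₁ p₂ r₁ = some r
  rw [graft_of_mem hr₁S, hr₁]
  rfl

lemma isRForest_graft (hr : r ∈ S) (h₁ : IsSupportedOn (S.erase r) p₁)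
    (h₂ : IsSupportedOn (T \ S) p₂) (hp₁ : IsRForest p₁) (hp₂ : IsRForest p₂) :
    IsRForest (graft S r p₁ p₂) := by
  refine isRForest_iff_forall_exists_root.mpr fun v => ?_
  by_cases hv : v ∈ S
  · exact ⟨r, (graft_reflTransGen_root_iff hr h₁ h₂ hp₁ v).mpr hv, graft_root hr h₂⟩
  obtain ⟨r₂, hvr₂, hr₂⟩ := isRForest_iff_forall_exists_root.mp hp₂ v
  have hr₂S : r₂ ∉ S := mem_compl.mp <| mem_of_reflTransGen_of_mem
    (fun x y hxy _ => mem_compl.mpr (mem_sdiff.mp (h₂ x y hxy).2).2) hvr₂ (mem_compl.mpr hv)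
  refine ⟨r₂, (graft_reflTransGen_iff_of_notMem hr h₁ h₂ hr₂S).mpr hvr₂, ?_⟩
  rw [graft_of_notMem fun h => hr₂S (mem_of_mem_erase h), hr₂]

lemma prod_graft {M : Type*} [CommMonoid M] (f : ℕ → M) (hST : S ⊆ T) (hr : r ∈ S)
    (h₁ : IsSupportedOn (S.erase r) p₁) (h₂ : IsSupportedOn (T \ S) p₂)
    (hp₁ : IsRForest p₁) :
    ∏ v ∈ T, f (hookLen (graft S r p₁ p₂) v) =
      f #S * (∏ v ∈ S.erase r, f (hookLen p₁ v)) * ∏ v ∈ T \ S, f (hookLen p₂ v) := by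
  have hroot : hookLen (graft S r p₁ p₂) r = #S :=
    hookLen_eq_card fun u => (graft_reflTransGen_root_iff hr h₁ h₂ hp₁ u).symm
  have hbelow : ∏ v ∈ S.erase r, f (hookLen (graft S r p₁ p₂) v) =
      ∏ v ∈ S.erase r, f (hookLen p₁ v) :=
    prod_congr rfl fun v hv => by
      rw [hookLen_congr fun u => graft_reflTransGen_iff_of_mem_erase hr h₁ h₂ hv]
  have houtside : ∏ v ∈ T \ S, f (hookLen (graft S r p₁ p₂) v) =
      ∏ v ∈ T \ S, f (hookLen p₂ v) :=
    prod_congr rfl fun v hv => by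
      rw [hookLen_congr fun u => graft_reflTransGen_iff_of_notMem hr h₁ h₂ (mem_sdiff.mp hv).2]
  rw [← prod_sdiff hST, ← mul_prod_erase S _ hr, hroot, hbelow, houtside, mul_comm]

end Graft

section Split

variable {n : ℕ} {T S : Finset (Fin n)} {r : Fin n} {p p₁ p₂ : Fin n → Option (Fin n)}

/-- Applied to a forest in which `S` is the tree of the root `r`: the forest left on `S` when `r`
is deleted. -/
def forestBelow (S : Finset (Fin n)) (r : Fin n) (p : Fin n → Option (Fin n)) :
    Fin n → Option (Fin n) :=
  fun x => if x ∈ S.erase r ∧ p x ≠ some r then p x else none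

def forestOutside (S : Finset (Fin n)) (p : Fin n → Option (Fin n)) : Fin n → Option (Fin n) :=
  fun x => if x ∈ S then none else p x

lemma mem_iff_of_parent (hrn : p r = none)
    (hS : ∀ u, u ∈ S ↔ ReflTransGen (parentRel p) u r) {u y : Fin n} (h : p u = some y) :
    y ∈ S ↔ u ∈ S := by
  rw [hS, hS]
  exact ⟨fun hy => .head h hy, fun hu => reflTransGen_of_parent_of_root h hu hrn⟩

lemma isSupportedOn_forestBelow (hrn : p r = none)
    (hS : ∀ u, u ∈ S ↔ ReflTransGen (parentRel p) u r) :
    IsSupportedOn (S.erase r) (forestBelow S r p) := by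
  intro x y h
  unfold forestBelow at h
  split_ifs at h with hx
  · refine ⟨hx.1, mem_erase.mpr ⟨fun hyr => hx.2 (hyr ▸ h), ?_⟩⟩
    exact (mem_iff_of_parent hrn hS h).mpr (mem_of_mem_erase hx.1)

lemma isSupportedOn_forestOutside (hp : IsSupportedOn T p) (hrn : p r = none)
    (hS : ∀ u, u ∈ S ↔ ReflTransGen (parentRel p) u r) :
    IsSupportedOn (T \ S) (forestOutside S p) := by
  intro x y h
  unfold forestOutside at h
  split_ifs at h with hx
  obtain ⟨hxT, hyT⟩ := hp x y h
  exact ⟨mem_sdiff.mpr ⟨hxT, hx⟩,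
    mem_sdiff.mpr ⟨hyT, fun hy => hx ((mem_iff_of_parent hrn hS h).mp hy)⟩⟩

lemma graft_forestBelow_forestOutside (hrn : p r = none)
    (hS : ∀ u, u ∈ S ↔ ReflTransGen (parentRel p) u r) :
    graft S r (forestBelow S r p) (forestOutside S p) = p := by
  funext x
  by_cases hx : x ∈ S.erase r
  · rw [graft_of_mem hx]
    obtain ⟨c, hc, -⟩ :=
      ((hS x).mp (mem_of_mem_erase hx)).cases_head.resolve_left (ne_of_mem_erase hx)
    have hc : p x = some c := hc
    by_cases hcr : c = r <;> simp [forestBelow, hx, hc, hcr]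
  · rw [graft_of_notMem hx]
    by_cases hxS : x ∈ S
    · obtain rfl : x = r := by_contra fun h => hx (mem_erase.mpr ⟨h, hxS⟩)
      simp [forestOutside, hxS, hrn]
    · simp [forestOutside, hxS]

lemma forestBelow_graft (h₁ : IsSupportedOn (S.erase r) p₁) :
    forestBelow S r (graft S r p₁ p₂) = p₁ := by
  funext x
  by_cases hx : x ∈ S.erase r
  · simp only [forestBelow, graft_of_mem hx]
    cases hq : p₁ x with
    | none => simp
    | some z => simp [hx, ne_of_mem_erase (h₁ x z hq).2]
  · simp [forestBelow, hx, h₁.eq_none hx]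

lemma forestOutside_graft (h₂ : IsSupportedOn (T \ S) p₂) :
    forestOutside S (graft S r p₁ p₂) = p₂ := by
  funext x
  by_cases hx : x ∈ S
  · simp [forestOutside, hx, h₂.eq_none fun h => (mem_sdiff.mp h).2 hx]
  · simp [forestOutside, hx, graft_of_notMem fun h => hx (mem_of_mem_erase h)]

lemma isRForest_forestBelow (hp : IsRForest p) : IsRForest (forestBelow S r p) :=
  hp.mono fun x y h => by
    unfold forestBelow at h
    split_ifs at h
    exact h

lemma isRForest_forestOutside (hp : IsRForest p) : IsRForest (forestOutside S p) :=
  hp.mono fun x y h => by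
    unfold forestOutside at h
    split_ifs at h
    exact h

end Split

section Decomposition

variable {n : ℕ} {T S : Finset (Fin n)} {r : Fin n}

open Classical in
noncomputable def forestsWithTree (T S : Finset (Fin n)) (r : Fin n) :
    Finset (Fin n → Option (Fin n)) :=
  {p ∈ forestsOn T | p r = none ∧ ∀ u, u ∈ S ↔ ReflTransGen (parentRel p) u r}

lemma mem_forestsWithTree {p : Fin n → Option (Fin n)} :
    p ∈ forestsWithTree T S r ↔ (IsRForest p ∧ IsSupportedOn T p) ∧ p r = none ∧
      ∀ u, u ∈ S ↔ ReflTransGen (parentRel p) u r := by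
  simp only [forestsWithTree, mem_filter, mem_forestsOn]

lemma sum_forestsWithTree (hST : S ⊆ T) (hr : r ∈ S) :
    ∑ p ∈ forestsWithTree T S r, ∏ v ∈ T, hookWeight (hookLen p v) =
      hookWeight #S * forestWeight (S.erase r) * forestWeight (T \ S) := by
  rw [forestWeight, forestWeight, mul_assoc, sum_mul_sum, ← sum_product', mul_sum]
  symm
  refine sum_nbij' (fun q => graft S r q.1 q.2)
    (fun p => (forestBelow S r p, forestOutside S p)) ?_ ?_ ?_ ?_ ?_
  · rintro ⟨p₁, p₂⟩ hq
    rw [mem_product, mem_forestsOn, mem_forestsOn] at hq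
    obtain ⟨⟨hp₁, h₁⟩, hp₂, h₂⟩ := hq
    exact mem_forestsWithTree.mpr ⟨⟨isRForest_graft hr h₁ h₂ hp₁ hp₂,
      isSupportedOn_graft hST hr h₁ h₂⟩, graft_root hr h₂,
      fun u => (graft_reflTransGen_root_iff hr h₁ h₂ hp₁ u).symm⟩
  · intro p hp
    obtain ⟨⟨hpf, hpT⟩, hrn, hS⟩ := mem_forestsWithTree.mp hp
    rw [mem_product, mem_forestsOn, mem_forestsOn]
    exact ⟨⟨isRForest_forestBelow hpf, isSupportedOn_forestBelow hrn hS⟩,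
      isRForest_forestOutside hpf, isSupportedOn_forestOutside hpT hrn hS⟩
  · rintro ⟨p₁, p₂⟩ hq
    rw [mem_product, mem_forestsOn, mem_forestsOn] at hq
    exact Prod.ext (forestBelow_graft hq.1.2) (forestOutside_graft hq.2.2)
  · intro p hp
    obtain ⟨-, hrn, hS⟩ := mem_forestsWithTree.mp hp
    exact graft_forestBelow_forestOutside hrn hS
  · rintro ⟨p₁, p₂⟩ hq
    rw [mem_product, mem_forestsOn, mem_forestsOn] at hq
    rw [prod_graft _ hST hr hq.1.2 hq.2.2 hq.1.1, mul_assoc]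

lemma existsUnique_forestsWithTree {p : Fin n → Option (Fin n)} (hp : p ∈ forestsOn T)
    {a : Fin n} (ha : a ∈ T) :
    ∃! x : (_ : Finset (Fin n)) × Fin n,
      x ∈ {S ∈ T.powerset | a ∈ S}.sigma (fun S => S) ∧
        p ∈ forestsWithTree T x.1 x.2 := by
  classical
  obtain ⟨hpf, hpT⟩ := mem_forestsOn.mp hp
  obtain ⟨r, har, hr⟩ := isRForest_iff_forall_exists_root.mp hpf a
  have hrT : r ∈ T := mem_of_reflTransGen_of_mem (fun x y h _ => (hpT x y h).2) har ha
  have hS : ∀ u, u ∈ {u ∈ T | ReflTransGen (parentRel p) u r} ↔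
      ReflTransGen (parentRel p) u r := fun u =>
    ⟨fun hu => (mem_filter.mp hu).2, fun h => mem_filter.mpr ⟨(reflTransGen_of_edges_into
      (q := p) (fun x y _ h => (hpT x y h).1) (fun _ _ _ => id) hrT h).1, h⟩⟩
  refine ⟨⟨_, r⟩, ⟨mem_sigma.mpr ⟨mem_filter.mpr ⟨mem_powerset.mpr (filter_subset _ _),
    (hS a).mpr har⟩, (hS r).mpr .refl⟩, mem_forestsWithTree.mpr ⟨⟨hpf, hpT⟩, hr, hS⟩⟩,
    ?_⟩
  rintro ⟨S', r'⟩ ⟨hx, hp'⟩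
  obtain ⟨-, hr', hS'⟩ := mem_forestsWithTree.mp hp'
  have ha' : a ∈ S' := (mem_filter.mp (mem_sigma.mp hx).1).2
  obtain rfl : r' = r := eq_of_reflTransGen_of_roots hr' hr ((hS' a).mp ha') har
  obtain rfl : S' = _ := ext fun u => (hS' u).trans (hS u).symm
  rfl

lemma sum_forestsOn_eq_sum_forestsWithTree {M : Type*} [AddCommMonoid M] {a : Fin n}
    (ha : a ∈ T) (f : (Fin n → Option (Fin n)) → M) :
    ∑ p ∈ forestsOn T, f p =
      ∑ S ∈ T.powerset with a ∈ S, ∑ r ∈ S, ∑ p ∈ forestsWithTree T S r, f p := by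
  classical
  rw [sum_sigma', ← sum_sum_filter_of_existsUnique
    (fun p (x : (_ : Finset (Fin n)) × Fin n) => p ∈ forestsWithTree T x.1 x.2)
    (fun p hp => existsUnique_forestsWithTree hp ha) f]
  refine sum_congr rfl fun x _ => ?_
  rw [filter_mem_eq_inter,
    inter_eq_right.mpr fun p hp => mem_forestsOn.mpr (mem_forestsWithTree.mp hp).1]

lemma forestWeight_eq_sum {a : Fin n} (ha : a ∈ T) :
    forestWeight T = ∑ S ∈ T.powerset with a ∈ S,
      ∑ r ∈ S, hookWeight #S * forestWeight (S.erase r) * forestWeight (T \ S) := by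
  rw [forestWeight, sum_forestsOn_eq_sum_forestsWithTree ha]
  refine sum_congr rfl fun S hS => sum_congr rfl fun r hr => ?_
  exact sum_forestsWithTree (mem_powerset.mp (mem_filter.mp hS).1) hr

end Decomposition

section Numerics

open Nat in
lemma doubleFactorial_two_mul_mul_doubleFactorial_two_mul_sub_one (k : ℕ) :
    (2 * k)‼ * (2 * k - 1)‼ = (2 * k)! := by
  cases k with
  | zero => rfl
  | succ j =>
    rw [show 2 * (j + 1) = 2 * j + 1 + 1 by ring, factorial_eq_mul_doubleFactorial]
    rfl

lemma succ_mul_hookWeight_succ (k : ℕ) :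
    ((k : ℚ) + 1) * hookWeight (k + 1) = 2 * 4 ^ k / k.centralBinom := by
  have hdf : (2 ^ k * k.factorial * Nat.doubleFactorial (2 * k - 1) : ℚ) =
      k.centralBinom * k.factorial * k.factorial := by
    have h := Nat.choose_mul_factorial_mul_factorial (Nat.le_add_right k k)
    rw [Nat.add_sub_cancel, ← two_mul,
      ← doubleFactorial_two_mul_mul_doubleFactorial_two_mul_sub_one,
      Nat.doubleFactorial_two_mul] at h
    rw [Nat.centralBinom_eq_two_mul_choose]
    exact_mod_cast h.symm
  rw [hookWeight, show 2 * (k + 1) - 2 = 2 * k by omega,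
    show 2 * (k + 1) - 3 = 2 * k - 1 by omega, Nat.doubleFactorial_two_mul]
  have hcb : (k.centralBinom : ℚ) ≠ 0 := by exact_mod_cast k.centralBinom_ne_zero
  have hk : (k.factorial : ℚ) ≠ 0 := by positivity
  push_cast
  field_simp
  refine mul_left_cancel₀ hk ?_
  rw [show (4 : ℚ) ^ k = 2 ^ k * 2 ^ k by rw [← mul_pow]; norm_num]
  linear_combination (-2 ^ k : ℚ) * hdf

lemma two_mul_sum_four_pow_mul_centralBinom (m : ℕ) :
    2 * ∑ k ∈ range (m + 1), 4 ^ k * (m - k).centralBinom = (m + 1) * (m + 1).centralBinom := by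
  induction m with
  | zero => decide
  | succ m ih =>
    rw [sum_range_succ', Nat.succ_mul_centralBinom_succ]
    simp only [Nat.add_sub_add_right, pow_succ, Nat.sub_zero, pow_zero, one_mul]
    have h4 : ∑ k ∈ range (m + 1), 4 ^ k * 4 * (m - k).centralBinom =
        4 * ∑ k ∈ range (m + 1), 4 ^ k * (m - k).centralBinom := by
      rw [mul_sum]
      exact sum_congr rfl fun _ _ => by ring
    rw [h4, mul_add, ← mul_assoc, mul_comm 2 4, mul_assoc, ih]
    ring

lemma sum_choose_mul_hookWeight (m : ℕ) :
    ∑ k ∈ range (m + 1), (m.choose k : ℚ) * (((k : ℚ) + 1) * hookWeight (k + 1) *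
      (k.factorial * k.centralBinom) * ((m - k).factorial * (m - k).centralBinom)) =
      (m + 1).factorial * (m + 1).centralBinom := by
  have hterm : ∀ k ∈ range (m + 1), (m.choose k : ℚ) * (((k : ℚ) + 1) * hookWeight (k + 1) *
      (k.factorial * k.centralBinom) * ((m - k).factorial * (m - k).centralBinom)) =
      m.factorial * (2 * 4 ^ k * (m - k).centralBinom) := by
    intro k hk
    have hfac : (m.choose k * k.factorial * (m - k).factorial : ℚ) = m.factorial := by
      exact_mod_cast Nat.choose_mul_factorial_mul_factorial (Nat.lt_succ_iff.mp (mem_range.mp hk))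
    have hcb : (k.centralBinom : ℚ) ≠ 0 := by exact_mod_cast k.centralBinom_ne_zero
    rw [succ_mul_hookWeight_succ, ← hfac]
    field_simp
  have hsum := two_mul_sum_four_pow_mul_centralBinom m
  rw [sum_congr rfl hterm, ← mul_sum, Nat.factorial_succ]
  rw [mul_sum] at hsum
  have hsum' : ∑ k ∈ range (m + 1), (2 * 4 ^ k * (m - k).centralBinom : ℚ) =
      (m + 1) * (m + 1).centralBinom := by
    exact_mod_cast (sum_congr rfl fun k _ => by ring).trans hsum
  rw [hsum']
  push_cast
  ring

end Numerics

section Main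

variable {n : ℕ}

lemma forestWeight_eq_sum_range {T : Finset (Fin n)} {F : ℕ → ℚ} {a : Fin n} (ha : a ∈ T)
    (hF : ∀ S ⊂ T, forestWeight S = F #S) :
    forestWeight T = ∑ k ∈ range (#T - 1 + 1), ((#T - 1).choose k : ℚ) *
      (((k : ℚ) + 1) * hookWeight (k + 1) * F k * F (#T - 1 - k)) := by
  have hT : #(T.erase a) = #T - 1 := card_erase_of_mem ha
  calc forestWeight T = ∑ S ∈ T.powerset with a ∈ S,
        (#S : ℚ) * (hookWeight #S * F (#S - 1) * F (#T - #S)) := by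
        rw [forestWeight_eq_sum ha]
        refine sum_congr rfl fun S hS => ?_
        obtain ⟨hST, haS⟩ := mem_filter.mp hS
        rw [mem_powerset] at hST
        rw [← nsmul_eq_mul, ← sum_const]
        refine sum_congr rfl fun r hr => ?_
        rw [hF _ ((erase_ssubset hr).trans_subset hST), hF _ (sdiff_ssubset hST ⟨a, haS⟩),
          card_erase_of_mem hr, card_sdiff_of_subset hST]
    _ = ∑ S ∈ (T.erase a).powerset,
        ((#S : ℚ) + 1) * (hookWeight (#S + 1) * F #S * F (#T - 1 - #S)) := by
        rw [sum_powerset_filter_mem ha]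
        refine sum_congr rfl fun S hS => ?_
        rw [card_insert_of_notMem fun h => notMem_erase a T (mem_powerset.mp hS h),
          Nat.sub_sub, Nat.add_comm 1, Nat.add_sub_cancel]
        push_cast
        rfl
    _ = _ := by
        rw [sum_powerset_apply_card
          (fun k => ((k : ℚ) + 1) * (hookWeight (k + 1) * F k * F (#T - 1 - k))), hT]
        simp only [nsmul_eq_mul, mul_assoc]

lemma forestWeight_eq_factorial_mul_centralBinom (T : Finset (Fin n)) :
    forestWeight T = (#T).factorial * (#T).centralBinom := by
  induction T using Finset.strongInduction with
  | H T ih =>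
    obtain rfl | ⟨a, ha⟩ := T.eq_empty_or_nonempty
    · simp [forestWeight_empty]
    obtain ⟨m, hm⟩ : ∃ m, #T = m + 1 := Nat.exists_eq_add_one.mpr (card_pos.mpr ⟨a, ha⟩)
    rw [forestWeight_eq_sum_range (F := fun k => (k.factorial : ℚ) * k.centralBinom) ha ih, hm,
      Nat.add_sub_cancel]
    exact sum_choose_mul_hookWeight m

lemma finsum_prod_hookWeight_eq_forestWeight_univ :
    ∑ᶠ p : {p : Fin n → Option (Fin n) // IsRForest p}, ∏ v, hookWeight (hookLen p.1 v) =
      forestWeight (univ : Finset (Fin n)) := by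
  classical
  rw [finsum_eq_sum_of_fintype, forestWeight]
  refine (sum_subtype (forestsOn univ) (fun p => ?_) fun p => ∏ v, hookWeight (hookLen p v)).symm
  simp [mem_forestsOn, IsSupportedOn]

end Main

theorem central_binomial_hook_formula_forests_general (n : ℕ) :
    (1 / (n.factorial : ℚ)) *
      ∑ᶠ p : {p : Fin n → Option (Fin n) // IsRForest p},
        ∏ v : Fin n,
          2 * (Nat.doubleFactorial (2 * hookLen (p : Fin n → Option (Fin n)) v - 2) : ℚ) /
            ((hookLen (p : Fin n → Option (Fin n)) v : ℚ) *
              (Nat.doubleFactorial (2 * hookLen (p : Fin n → Option (Fin n)) v - 3) : ℚ))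
    = ((2 * n).choose n : ℚ) := by
  change 1 / _ * ∑ᶠ p : {p : Fin n → Option (Fin n) // IsRForest p},
    ∏ v, hookWeight (hookLen p.1 v) = _
  rw [finsum_prod_hookWeight_eq_forestWeight_univ, forestWeight_eq_factorial_mul_centralBinom,
    card_univ, Fintype.card_fin, Nat.centralBinom_eq_two_mul_choose]
  have : (n.factorial : ℚ) ≠ 0 := by positivity
  field_simp

/-- The central binomial coefficient hook length formula for labeled forests. -/
theorem central_binomial_hook_formula_forests (n : ℕ) (hn : 1 ≤ n) :
    (1 / (n.factorial : ℚ)) *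
      ∑ᶠ p : {p : Fin n → Option (Fin n) // IsRForest p},
        ∏ v : Fin n,
          2 * (Nat.doubleFactorial (2 * hookLen (p : Fin n → Option (Fin n)) v - 2) : ℚ) /
            ((hookLen (p : Fin n → Option (Fin n)) v : ℚ) *
              (Nat.doubleFactorial (2 * hookLen (p : Fin n → Option (Fin n)) v - 3) : ℚ))
    = ((2 * n).choose n : ℚ) :=
  central_binomial_hook_formula_forests_general n
end
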